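/- arXiv:1007.3782 — 6 statements merged into one kernel-verified Lean document; each statement's English description precedes it below -/
import Mathlib

section
/- The polynomial potential H(V,W) = V²/2 + VW²/2 + W⁴/4 satisfies the five integrability conditions H_VVVV·H_VV = 2H_VVV², H_VVVW·H_VV = 2H_VVW·H_VVV, H_VVWW·H_VV = 2H_VVW², H_VWWW·H_VV = 3H_VWW·H_VVW − H_WWW·H_VVV, and H_WWWW·H_VV = 6H_VWW² − 4H_WWW·H_VVW. -/
/-! `H_VV = 1`, and among the partial derivatives of order three and four only `H_VWW = 1`,
`H_WWW = 6W` and `H_WWWW = 6` are nonzero. So all conditions read `0 = 0`, except the last,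
which reads `6 = 6 - 0`. -/

noncomputable def pV (f : ℝ → ℝ → ℝ) : ℝ → ℝ → ℝ := fun v w => deriv (fun x => f x w) v
noncomputable def pW (f : ℝ → ℝ → ℝ) : ℝ → ℝ → ℝ := fun v w => deriv (fun y => f v y) w

/-- The five integrability conditions for a potential `H(V,W)` at the point `(v, w)`.
Subscripts: `H_VVW = ∂³H/∂V²∂W`, etc. -/
def IntCond (H : ℝ → ℝ → ℝ) (v w : ℝ) : Prop :=
  pV (pV (pV (pV H))) v w * pV (pV H) v w = 2 * (pV (pV (pV H)) v w) ^ 2 ∧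
  pW (pV (pV (pV H))) v w * pV (pV H) v w =
    2 * pW (pV (pV H)) v w * pV (pV (pV H)) v w ∧
  pW (pW (pV (pV H))) v w * pV (pV H) v w = 2 * (pW (pV (pV H)) v w) ^ 2 ∧
  pW (pW (pW (pV H))) v w * pV (pV H) v w =
    3 * pW (pW (pV H)) v w * pW (pV (pV H)) v w -
      pW (pW (pW H)) v w * pV (pV (pV H)) v w ∧
  pW (pW (pW (pW H))) v w * pV (pV H) v w =
    6 * (pW (pW (pV H)) v w) ^ 2 - 4 * pW (pW (pW H)) v w * pW (pV (pV H)) v w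

section Partials

variable {f g : ℝ → ℝ → ℝ}

theorem pV_eq_of_hasDerivAt (h : ∀ v w, HasDerivAt (fun x => f x w) (g v w) v) : pV f = g :=
  funext fun v => funext fun w => (h v w).deriv

theorem pW_eq_of_hasDerivAt (h : ∀ v w, HasDerivAt (f v) (g v w) w) : pW f = g :=
  funext fun v => funext fun w => (h v w).deriv

theorem pV_const (c : ℝ) : pV (fun _ _ => c) = fun _ _ => 0 :=
  pV_eq_of_hasDerivAt fun _ _ => hasDerivAt_const _ c

theorem pW_const (c : ℝ) : pW (fun _ _ => c) = fun _ _ => 0 :=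
  pW_eq_of_hasDerivAt fun _ _ => hasDerivAt_const _ c

end Partials

noncomputable def quarticPotential : ℝ → ℝ → ℝ := fun V W => V ^ 2 / 2 + V * W ^ 2 / 2 + W ^ 4 / 4

theorem pV_quarticPotential : pV quarticPotential = fun v w => v + w ^ 2 / 2 :=
  pV_eq_of_hasDerivAt fun v w =>
    ((((hasDerivAt_pow 2 v).div_const 2).add
      (((hasDerivAt_id' v).mul_const (w ^ 2)).div_const 2)).add_const (w ^ 4 / 4)).congr_deriv
      (by norm_num)

theorem pV_pV_quarticPotential : pV (pV quarticPotential) = fun _ _ => 1 := by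
  rw [pV_quarticPotential]
  exact pV_eq_of_hasDerivAt fun v _ => (hasDerivAt_id' v).add_const _

theorem pW_pV_quarticPotential : pW (pV quarticPotential) = fun _ w => w := by
  rw [pV_quarticPotential]
  exact pW_eq_of_hasDerivAt fun v w =>
    (((hasDerivAt_pow 2 w).div_const 2).const_add v).congr_deriv (by norm_num)

theorem pW_pW_pV_quarticPotential : pW (pW (pV quarticPotential)) = fun _ _ => 1 := by
  rw [pW_pV_quarticPotential]
  exact pW_eq_of_hasDerivAt fun _ w => hasDerivAt_id' w

theorem pW_quarticPotential : pW quarticPotential = fun v w => v * w + w ^ 3 :=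
  pW_eq_of_hasDerivAt fun v w =>
    (((((hasDerivAt_pow 2 w).const_mul v).div_const 2).const_add (v ^ 2 / 2)).add
      ((hasDerivAt_pow 4 w).div_const 4)).congr_deriv (by norm_num; ring)

theorem pW_pW_quarticPotential : pW (pW quarticPotential) = fun v w => v + 3 * w ^ 2 := by
  rw [pW_quarticPotential]
  exact pW_eq_of_hasDerivAt fun v w =>
    (((hasDerivAt_id' w).const_mul v).add (hasDerivAt_pow 3 w)).congr_deriv (by norm_num)

theorem pW_pW_pW_quarticPotential : pW (pW (pW quarticPotential)) = fun _ w => 6 * w := by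
  rw [pW_pW_quarticPotential]
  exact pW_eq_of_hasDerivAt fun v w =>
    (((hasDerivAt_pow 2 w).const_mul 3).const_add v).congr_deriv (by norm_num; ring)

theorem pW_pW_pW_pW_quarticPotential : pW (pW (pW (pW quarticPotential))) = fun _ _ => 6 := by
  rw [pW_pW_pW_quarticPotential]
  exact pW_eq_of_hasDerivAt fun _ w => ((hasDerivAt_id' w).const_mul 6).congr_deriv (mul_one 6)

theorem stmt_1 :
    ∀ v w : ℝ, IntCond (fun V W => V ^ 2 / 2 + V * W ^ 2 / 2 + W ^ 4 / 4) v w := by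
  intro v w
  change IntCond quarticPotential v w
  -- outermost derivatives first, so that each rewrite still finds its pattern
  rw [IntCond, pW_pW_pW_pW_quarticPotential, pW_pW_pW_quarticPotential,
    pW_pW_pV_quarticPotential, pV_pV_quarticPotential]
  simp only [pV_const, pW_const]
  norm_num
end

section
/- For every α ∈ ℝ, the potential H(V,W) = V²/(2W) + αW⁷, defined on the region W ≠ 0, satisfies the five integrability conditions H_VVVV·H_VV = 2H_VVV², H_VVVW·H_VV = 2H_VVW·H_VVV, H_VVWW·H_VV = 2H_VVW², H_VWWW·H_VV = 3H_VWW·H_VVW − H_WWW·H_VVV, and H_WWWW·H_VV = 6H_VWW² − 4H_WWW·H_VVW. -/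
/-!
Write `H(V, W) = V² a(W) + b(W)` with `a = 1/(2W)` and `b = αW⁷`. Every partial derivative
involving `V` at least once factors as `g(V) a⁽ʲ⁾(W)`, and the `V`-derivatives of order `≥ 3`
vanish, so the five conditions reduce to the ordinary differential identities
`a a'' = 2a'²`, `a a''' = 3a'a''`, `a a'''' + 4a'a''' = 12a''²` and `a b'''' + 4a'b''' = 0`.
The first three hold for the reciprocal of any linear function, and the last one says that
`a⁴ b'''` is constant, which holds for `b'''` proportional to `W⁴`.
-/

open scoped ContDiff

section IterateDeriv

variable {𝕜 : Type*} [NontriviallyNormedField 𝕜]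

theorem ContDiffOn.iterate_deriv_of_isOpen {F : Type*} [NormedAddCommGroup F] [NormedSpace 𝕜 F]
    {f : 𝕜 → F} {s : Set 𝕜} (hs : IsOpen s) :
    ∀ k : ℕ, ContDiffOn 𝕜 ∞ f s → ContDiffOn 𝕜 ∞ (deriv^[k] f) s
  | 0, hf => hf
  | k + 1, hf =>
    ContDiffOn.iterate_deriv_of_isOpen hs k ((contDiffOn_infty_iff_deriv_of_isOpen hs).1 hf).2

theorem ContDiffOn.differentiableAt_iterate_deriv {F : Type*} [NormedAddCommGroup F]
    [NormedSpace 𝕜 F] {f : 𝕜 → F} {s : Set 𝕜} {x : 𝕜} (hf : ContDiffOn 𝕜 ∞ f s) (hs : IsOpen s)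
    (hx : x ∈ s) (k : ℕ) : DifferentiableAt 𝕜 (deriv^[k] f) x :=
  ((hf.iterate_deriv_of_isOpen hs k).differentiableOn (by simp) x hx).differentiableAt
    (hs.mem_nhds hx)

theorem iter_deriv_const_mul_field {𝕜' : Type*} [NontriviallyNormedField 𝕜']
    [NormedAlgebra 𝕜 𝕜'] (c : 𝕜') (f : 𝕜 → 𝕜') (k : ℕ) :
    deriv^[k] (fun x => c * f x) = fun x => c * deriv^[k] f x := by
  induction k with
  | zero => rfl
  | succ k ih =>
    rw [Function.iterate_succ_apply', ih, deriv_const_mul_field', Function.iterate_succ_apply']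

end IterateDeriv

section SeparatedPotential

variable (g a b : ℝ → ℝ)

theorem pV_mul : pV (fun V W => g V * a W) = fun V W => deriv g V * a W := by
  ext v w
  exact congr_fun (deriv_mul_const_field' (a w)) v

theorem pV_mul_add : pV (fun V W => g V * a W + b W) = fun V W => deriv g V * a W := by
  ext v w
  exact (deriv_add_const (b w)).trans (congr_fun (deriv_mul_const_field' (a w)) v)

theorem pW_mul : pW (fun V W => g V * a W) = fun V W => g V * deriv a W := by
  ext v w
  exact congr_fun (deriv_const_mul_field' (g v)) w

variable {g a b} {s : Set ℝ}

theorem pW_iterate_mul_add_of_isOpen (hs : IsOpen s) (ha : ContDiffOn ℝ ∞ a s)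
    (hb : ContDiffOn ℝ ∞ b s) (k : ℕ) (v : ℝ) {w : ℝ} (hw : w ∈ s) :
    pW^[k] (fun V W => g V * a W + b W) v w = g v * deriv^[k] a w + deriv^[k] b w := by
  induction k generalizing w with
  | zero => rfl
  | succ k ih =>
    have hEq : (fun y => pW^[k] (fun V W => g V * a W + b W) v y) =ᶠ[nhds w]
        fun y => g v * deriv^[k] a y + deriv^[k] b y :=
      Filter.eventually_of_mem (hs.mem_nhds hw) fun y hy => ih hy
    rw [Function.iterate_succ_apply', pW, hEq.deriv_eq,
      deriv_fun_add ((ha.differentiableAt_iterate_deriv hs hw k).const_mul _)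
        (hb.differentiableAt_iterate_deriv hs hw k), deriv_const_mul_field',
      Function.iterate_succ_apply', Function.iterate_succ_apply']

theorem intCond_sq_mul_add (hs : IsOpen s) (ha : ContDiffOn ℝ ∞ a s) (hb : ContDiffOn ℝ ∞ b s)
    (v : ℝ) {w : ℝ} (hw : w ∈ s)
    (h₁ : a w * deriv^[2] a w = 2 * deriv a w ^ 2)
    (h₂ : a w * deriv^[3] a w = 3 * deriv a w * deriv^[2] a w)
    (h₃ : a w * deriv^[4] a w + 4 * deriv a w * deriv^[3] a w = 12 * deriv^[2] a w ^ 2)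
    (h₄ : a w * deriv^[4] b w + 4 * deriv a w * deriv^[3] b w = 0) :
    IntCond (fun V W => V ^ 2 * a W + b W) v w := by
  have hW₃ : pW (pW (pW (fun V W => V ^ 2 * a W + b W))) v w =
      v ^ 2 * deriv^[3] a w + deriv^[3] b w :=
    pW_iterate_mul_add_of_isOpen hs ha hb 3 v hw
  have hW₄ : pW (pW (pW (pW (fun V W => V ^ 2 * a W + b W)))) v w =
      v ^ 2 * deriv^[4] a w + deriv^[4] b w :=
    pW_iterate_mul_add_of_isOpen hs ha hb 4 v hw
  have hd₁ : deriv (fun V : ℝ => V ^ 2) = fun V => 2 * V := by ext; simp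
  have hd₂ : deriv (fun V : ℝ => 2 * V) = fun _ => 2 := by ext; simp
  simp only [IntCond, pV_mul_add, pV_mul, pW_mul, hW₃, hW₄, hd₁, hd₂, deriv_const']
  simp only [Function.iterate_succ, Function.iterate_zero, Function.comp_apply, id_eq]
    at h₁ h₂ h₃ h₄ ⊢
  exact ⟨by ring, by ring, by linear_combination 4 * h₁, by linear_combination 4 * v * h₂,
    by linear_combination 2 * v ^ 2 * h₃ + 2 * h₄⟩

end SeparatedPotential

theorem stmt_2 (α : ℝ) :
    ∀ v w : ℝ, w ≠ 0 → IntCond (fun V W => V ^ 2 / (2 * W) + α * W ^ 7) v w := by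
  intro v w hw
  have hH : (fun V W : ℝ => V ^ 2 / (2 * W) + α * W ^ 7) =
      fun V W => V ^ 2 * (2⁻¹ * W⁻¹) + α * W ^ 7 := by
    ext V W; ring
  rw [hH]
  refine intCond_sq_mul_add isOpen_compl_singleton
    (contDiffOn_const.mul (contDiffOn_inv ℝ)) (by fun_prop) v hw ?_ ?_ ?_ ?_ <;>
  simp only [iter_deriv_const_mul_field, iter_deriv_inv', iter_deriv_pow', deriv_const_mul_field',
    deriv_inv', Finset.prod_range_succ, Nat.cast_ofNat, Int.reduceSub, zpow_neg, zpow_ofNat] <;>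
  field_simp <;>
  ring
end

section
/- The potential H(V,W) = V·ln(V/W), defined for V > 0 and W > 0, satisfies the five integrability conditions H_VVVV·H_VV = 2H_VVV², H_VVVW·H_VV = 2H_VVW·H_VVV, H_VVWW·H_VV = 2H_VVW², H_VWWW·H_VV = 3H_VWW·H_VVW − H_WWW·H_VVV, and H_WWWW·H_VV = 6H_VWW² − 4H_WWW·H_VVW. -/
/-!
On the open quadrant `H = V log V - V log W`, and since the quadrant is open, the partial
derivatives of `H` there are those of this splitting: `H_VV` and the higher `V`-derivatives depend
on `V` alone (so any further `W`-derivative vanishes), `H_VW`, `H_VWW`, ... depend on `W` alone, and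
`H_W`, `H_WW`, ... are `V` times powers of `1 / W`. Each condition is then a rational identity.
-/

open Real Topology

def EqOnQuadrant (f g : ℝ → ℝ → ℝ) : Prop :=
  ∀ v w, 0 < v → 0 < w → f v w = g v w

namespace EqOnQuadrant

variable {f g g' : ℝ → ℝ → ℝ}

theorem pV (h : EqOnQuadrant f g)
    (hg : ∀ v w, 0 < v → 0 < w → HasDerivAt (g · w) (g' v w) v) :
    EqOnQuadrant (_root_.pV f) g' := by
  intro v w hv hw
  have hfg : (f · w) =ᶠ[𝓝 v] (g · w) := by
    filter_upwards [eventually_gt_nhds hv] with x hx using h x w hx hw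
  exact hfg.deriv_eq.trans (hg v w hv hw).deriv

theorem pW (h : EqOnQuadrant f g)
    (hg : ∀ v w, 0 < v → 0 < w → HasDerivAt (g v ·) (g' v w) w) :
    EqOnQuadrant (_root_.pW f) g' := by
  intro v w hv hw
  have hfg : (f v ·) =ᶠ[𝓝 w] (g v ·) := by
    filter_upwards [eventually_gt_nhds hw] with y hy using h v y hv hy
  exact hfg.deriv_eq.trans (hg v w hv hw).deriv

theorem pW_eq_zero {a : ℝ → ℝ} (h : EqOnQuadrant f fun v _ => a v) :
    EqOnQuadrant (_root_.pW f) fun _ _ => 0 :=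
  h.pW fun v w _ _ => hasDerivAt_const w (a v)

end EqOnQuadrant

noncomputable def klPotential : ℝ → ℝ → ℝ := fun V W => V * log (V / W)

theorem eqOnQuadrant_klPotential :
    EqOnQuadrant klPotential fun v w => v * log v - v * log w := fun v w hv hw => by
  simp only [klPotential, log_div hv.ne' hw.ne', mul_sub]

theorem eqOnQuadrant_pV_klPotential :
    EqOnQuadrant (pV klPotential) fun v w => log v - log w + 1 :=
  eqOnQuadrant_klPotential.pV fun v w hv _ =>
    ((hasDerivAt_mul_log hv.ne').sub ((hasDerivAt_id v).mul_const (log w))).congr_deriv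
      (by ring)

theorem eqOnQuadrant_pV_pV_klPotential :
    EqOnQuadrant (pV (pV klPotential)) fun v _ => v⁻¹ :=
  eqOnQuadrant_pV_klPotential.pV fun _ w hv _ =>
    ((hasDerivAt_log hv.ne').sub_const (log w)).add_const 1

theorem eqOnQuadrant_pV_pV_pV_klPotential :
    EqOnQuadrant (pV (pV (pV klPotential))) fun v _ => -(v ^ 2)⁻¹ :=
  eqOnQuadrant_pV_pV_klPotential.pV fun _ _ hv _ => hasDerivAt_inv hv.ne'

theorem eqOnQuadrant_pV_pV_pV_pV_klPotential :
    EqOnQuadrant (pV (pV (pV (pV klPotential)))) fun v _ => 2 * (v ^ 3)⁻¹ :=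
  eqOnQuadrant_pV_pV_pV_klPotential.pV fun v _ hv _ =>
    ((hasDerivAt_pow 2 v).inv (by positivity)).neg.congr_deriv (by field_simp; ring)

theorem eqOnQuadrant_pW_klPotential :
    EqOnQuadrant (pW klPotential) fun v w => -(v * w⁻¹) :=
  eqOnQuadrant_klPotential.pW fun v w _ hw =>
    ((hasDerivAt_const w (v * log v)).sub ((hasDerivAt_log hw.ne').const_mul v)).congr_deriv
      (zero_sub _)

theorem eqOnQuadrant_pW_pW_klPotential :
    EqOnQuadrant (pW (pW klPotential)) fun v w => v * (w ^ 2)⁻¹ :=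
  eqOnQuadrant_pW_klPotential.pW fun v w _ hw =>
    ((hasDerivAt_inv hw.ne').const_mul v).neg.congr_deriv (by ring)

theorem eqOnQuadrant_pW_pW_pW_klPotential :
    EqOnQuadrant (pW (pW (pW klPotential))) fun v w => -(2 * v * (w ^ 3)⁻¹) :=
  eqOnQuadrant_pW_pW_klPotential.pW fun v w _ hw =>
    (((hasDerivAt_pow 2 w).inv (by positivity)).const_mul v).congr_deriv (by field_simp; ring)

theorem eqOnQuadrant_pW_pW_pW_pW_klPotential :
    EqOnQuadrant (pW (pW (pW (pW klPotential)))) fun v w => 6 * v * (w ^ 4)⁻¹ :=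
  eqOnQuadrant_pW_pW_pW_klPotential.pW fun v w _ hw =>
    (((hasDerivAt_pow 3 w).inv (by positivity)).const_mul (2 * v)).neg.congr_deriv
      (by field_simp; ring)

theorem eqOnQuadrant_pW_pV_klPotential :
    EqOnQuadrant (pW (pV klPotential)) fun _ w => -w⁻¹ :=
  eqOnQuadrant_pV_klPotential.pW fun v w _ hw =>
    (((hasDerivAt_const w (log v)).sub (hasDerivAt_log hw.ne')).add_const 1).congr_deriv
      (zero_sub _)

theorem eqOnQuadrant_pW_pW_pV_klPotential :
    EqOnQuadrant (pW (pW (pV klPotential))) fun _ w => (w ^ 2)⁻¹ :=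
  eqOnQuadrant_pW_pV_klPotential.pW fun _ _ _ hw =>
    (hasDerivAt_inv hw.ne').neg.congr_deriv (neg_neg _)

theorem eqOnQuadrant_pW_pW_pW_pV_klPotential :
    EqOnQuadrant (pW (pW (pW (pV klPotential)))) fun _ w => -(2 * (w ^ 3)⁻¹) :=
  eqOnQuadrant_pW_pW_pV_klPotential.pW fun _ w _ hw =>
    ((hasDerivAt_pow 2 w).inv (by positivity)).congr_deriv (by field_simp; ring)

theorem eqOnQuadrant_pW_pV_pV_klPotential :
    EqOnQuadrant (pW (pV (pV klPotential))) fun _ _ => 0 :=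
  eqOnQuadrant_pV_pV_klPotential.pW_eq_zero

theorem eqOnQuadrant_pW_pW_pV_pV_klPotential :
    EqOnQuadrant (pW (pW (pV (pV klPotential)))) fun _ _ => 0 :=
  eqOnQuadrant_pW_pV_pV_klPotential.pW_eq_zero

theorem eqOnQuadrant_pW_pV_pV_pV_klPotential :
    EqOnQuadrant (pW (pV (pV (pV klPotential)))) fun _ _ => 0 :=
  eqOnQuadrant_pV_pV_pV_klPotential.pW_eq_zero

theorem stmt_3 :
    ∀ v w : ℝ, 0 < v → 0 < w → IntCond (fun V W => V * Real.log (V / W)) v w := by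
  intro v w hv hw
  change IntCond klPotential v w
  rw [IntCond, eqOnQuadrant_pV_pV_klPotential v w hv hw,
    eqOnQuadrant_pV_pV_pV_klPotential v w hv hw,
    eqOnQuadrant_pV_pV_pV_pV_klPotential v w hv hw,
    eqOnQuadrant_pW_pV_pV_klPotential v w hv hw,
    eqOnQuadrant_pW_pW_pV_pV_klPotential v w hv hw,
    eqOnQuadrant_pW_pV_pV_pV_klPotential v w hv hw,
    eqOnQuadrant_pW_pW_pV_klPotential v w hv hw,
    eqOnQuadrant_pW_pW_pW_pV_klPotential v w hv hw,
    eqOnQuadrant_pW_pW_pW_klPotential v w hv hw,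
    eqOnQuadrant_pW_pW_pW_pW_klPotential v w hv hw]
  refine ⟨?_, ?_, ?_, ?_, ?_⟩ <;> field_simp <;> ring
end

section
/- Let g : I → ℝ be smooth on an open interval I with g''''(W) = 6·g''(W)² for all W ∈ I, and let H(V,W) = V·ln V + g(W)·V on (0,∞) × I. Then H satisfies the five integrability conditions H_VVVV·H_VV = 2H_VVV², H_VVVW·H_VV = 2H_VVW·H_VVV, H_VVWW·H_VV = 2H_VVW², H_VWWW·H_VV = 3H_VWW·H_VVW − H_WWW·H_VVV, and H_WWWW·H_VV = 6H_VWW² − 4H_WWW·H_VVW. -/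
theorem stmt_4 (I : Set ℝ) (hI : IsOpen I) (hIconv : Convex ℝ I)
    (g : ℝ → ℝ) (hg : ContDiffOn ℝ (⊤ : ℕ∞) g I)
    (hgode : ∀ W ∈ I, iteratedDeriv 4 g W = 6 * (iteratedDeriv 2 g W) ^ 2) :
    ∀ v w : ℝ, 0 < v → w ∈ I →
      IntCond (fun V W => V * Real.log V + g W * V) v w := by
  intro v w hv hw
  set H : ℝ → ℝ → ℝ := fun V W => V * Real.log V + g W * V with hH
  -- smoothness of g and its derivatives on I
  have hg0 : ContDiffOn ℝ ((⊤ : ℕ∞) : WithTop ℕ∞) g I := hg.of_le (by simp)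
  have hg1 : ContDiffOn ℝ ((⊤ : ℕ∞) : WithTop ℕ∞) (deriv g) I := hg0.deriv_of_isOpen hI (by norm_num)
  have hg2 : ContDiffOn ℝ ((⊤ : ℕ∞) : WithTop ℕ∞) (deriv (deriv g)) I := hg1.deriv_of_isOpen hI (by norm_num)
  have hg3 : ContDiffOn ℝ ((⊤ : ℕ∞) : WithTop ℕ∞) (deriv (deriv (deriv g))) I := hg2.deriv_of_isOpen hI (by norm_num)
  have hd0 : ∀ y ∈ I, DifferentiableAt ℝ g y := fun y hy =>
    (hg0.differentiableOn (by norm_num)).differentiableAt (hI.mem_nhds hy)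
  have hd1 : ∀ y ∈ I, DifferentiableAt ℝ (deriv g) y := fun y hy =>
    (hg1.differentiableOn (by norm_num)).differentiableAt (hI.mem_nhds hy)
  have hd2 : ∀ y ∈ I, DifferentiableAt ℝ (deriv (deriv g)) y := fun y hy =>
    (hg2.differentiableOn (by norm_num)).differentiableAt (hI.mem_nhds hy)
  have hd3 : ∀ y ∈ I, DifferentiableAt ℝ (deriv (deriv (deriv g))) y := fun y hy =>
    (hg3.differentiableOn (by norm_num)).differentiableAt (hI.mem_nhds hy)
  have hInhds : I ∈ nhds w := hI.mem_nhds hw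
  -- pV H
  have hA : ∀ x : ℝ, x ≠ 0 → ∀ y, pV H x y = Real.log x + 1 + g y := by
    intro x hx y
    have h1 : HasDerivAt (fun t : ℝ => t * Real.log t + g y * t)
        (Real.log x + 1 + g y) x := by
      have := (Real.hasDerivAt_mul_log hx).add ((hasDerivAt_id x).const_mul (g y))
      simpa [mul_comm, Pi.add_def] using this
    exact h1.deriv
  -- pV pV H
  have hB : ∀ x : ℝ, 0 < x → ∀ y, pV (pV H) x y = x⁻¹ := by
    intro x hx y
    have heq : (fun t => pV H t y) =ᶠ[nhds x] fun t => Real.log t + 1 + g y := by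
      filter_upwards [Ioi_mem_nhds hx] with t ht
      exact hA t (ne_of_gt ht) y
    have : deriv (fun t => Real.log t + 1 + g y) x = x⁻¹ := by
      have h1 : HasDerivAt (fun t => Real.log t + 1 + g y) x⁻¹ x := by
        simpa using ((Real.hasDerivAt_log (ne_of_gt hx)).add_const 1).add_const (g y)
      exact h1.deriv
    rw [show pV (pV H) x y = deriv (fun t => pV H t y) x from rfl, heq.deriv_eq, this]
  -- pV pV pV H
  have hC : ∀ x : ℝ, 0 < x → ∀ y, pV (pV (pV H)) x y = -(x ^ 2)⁻¹ := by
    intro x hx y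
    have heq : (fun t => pV (pV H) t y) =ᶠ[nhds x] fun t => t⁻¹ := by
      filter_upwards [Ioi_mem_nhds hx] with t ht
      exact hB t ht y
    have : deriv (fun t : ℝ => t⁻¹) x = -(x ^ 2)⁻¹ := by
      simp [deriv_inv]
    rw [show pV (pV (pV H)) x y = deriv (fun t => pV (pV H) t y) x from rfl, heq.deriv_eq, this]
  -- pV pV pV pV H
  have hD : pV (pV (pV (pV H))) v w = 2 * (v ^ 3)⁻¹ := by
    have heq : (fun t => pV (pV (pV H)) t w) =ᶠ[nhds v] fun t => -(t ^ 2)⁻¹ := by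
      filter_upwards [Ioi_mem_nhds hv] with t ht
      exact hC t ht w
    have h1 : HasDerivAt (fun t : ℝ => -(t ^ 2)⁻¹) (2 * (v ^ 3)⁻¹) v := by
      have h2 : HasDerivAt (fun t : ℝ => t ^ 2) (2 * v ^ 1) v := by
        simpa using hasDerivAt_pow 2 v
      have h3 : HasDerivAt (fun t : ℝ => -(t ^ 2)⁻¹) _ v := (h2.inv (by positivity)).neg
      convert h3 using 1
      field_simp
    rw [show pV (pV (pV (pV H))) v w = deriv (fun t => pV (pV (pV H)) t w) v from rfl,
      heq.deriv_eq, h1.deriv]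
  -- pW H
  have hE : ∀ x : ℝ, ∀ y ∈ I, pW H x y = deriv g y * x := by
    intro x y hy
    have h1 : HasDerivAt (fun s => x * Real.log x + g s * x) (deriv g y * x) y :=
      (((hd0 y hy).hasDerivAt.mul_const x).const_add _)
    exact h1.deriv
  -- pW pW H
  have hF : ∀ x : ℝ, ∀ y ∈ I, pW (pW H) x y = deriv (deriv g) y * x := by
    intro x y hy
    have heq : (fun s => pW H x s) =ᶠ[nhds y] fun s => deriv g s * x := by
      filter_upwards [hI.mem_nhds hy] with s hs
      exact hE x s hs
    have h1 : HasDerivAt (fun s => deriv g s * x) (deriv (deriv g) y * x) y :=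
      (hd1 y hy).hasDerivAt.mul_const x
    rw [show pW (pW H) x y = deriv (fun s => pW H x s) y from rfl, heq.deriv_eq, h1.deriv]
  -- pW pW pW H
  have hG : ∀ x : ℝ, ∀ y ∈ I, pW (pW (pW H)) x y = deriv (deriv (deriv g)) y * x := by
    intro x y hy
    have heq : (fun s => pW (pW H) x s) =ᶠ[nhds y] fun s => deriv (deriv g) s * x := by
      filter_upwards [hI.mem_nhds hy] with s hs
      exact hF x s hs
    have h1 : HasDerivAt (fun s => deriv (deriv g) s * x) (deriv (deriv (deriv g)) y * x) y :=
      (hd2 y hy).hasDerivAt.mul_const x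
    rw [show pW (pW (pW H)) x y = deriv (fun s => pW (pW H) x s) y from rfl, heq.deriv_eq,
      h1.deriv]
  -- pW pW pW pW H
  have hK : pW (pW (pW (pW H))) v w = deriv (deriv (deriv (deriv g))) w * v := by
    have heq : (fun s => pW (pW (pW H)) v s) =ᶠ[nhds w]
        fun s => deriv (deriv (deriv g)) s * v := by
      filter_upwards [hInhds] with s hs
      exact hG v s hs
    have h1 : HasDerivAt (fun s => deriv (deriv (deriv g)) s * v)
        (deriv (deriv (deriv (deriv g))) w * v) w := (hd3 w hw).hasDerivAt.mul_const v
    rw [show pW (pW (pW (pW H))) v w = deriv (fun s => pW (pW (pW H)) v s) w from rfl,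
      heq.deriv_eq, h1.deriv]
  -- pW pV H
  have hL : ∀ x : ℝ, x ≠ 0 → ∀ y ∈ I, pW (pV H) x y = deriv g y := by
    intro x hx y hy
    have heq : (fun s => pV H x s) = fun s => Real.log x + 1 + g s := funext fun s => hA x hx s
    have h1 : HasDerivAt (fun s => Real.log x + 1 + g s) (deriv g y) y :=
      (hd0 y hy).hasDerivAt.const_add _
    rw [show pW (pV H) x y = deriv (fun s => pV H x s) y from rfl, heq, h1.deriv]
  -- pW pW pV H
  have hM : ∀ x : ℝ, x ≠ 0 → ∀ y ∈ I, pW (pW (pV H)) x y = deriv (deriv g) y := by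
    intro x hx y hy
    have heq : (fun s => pW (pV H) x s) =ᶠ[nhds y] deriv g := by
      filter_upwards [hI.mem_nhds hy] with s hs
      exact hL x hx s hs
    rw [show pW (pW (pV H)) x y = deriv (fun s => pW (pV H) x s) y from rfl, heq.deriv_eq]
  -- pW pW pW pV H
  have hN : pW (pW (pW (pV H))) v w = deriv (deriv (deriv g)) w := by
    have heq : (fun s => pW (pW (pV H)) v s) =ᶠ[nhds w] deriv (deriv g) := by
      filter_upwards [hInhds] with s hs
      exact hM v (ne_of_gt hv) s hs
    rw [show pW (pW (pW (pV H))) v w = deriv (fun s => pW (pW (pV H)) v s) w from rfl,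
      heq.deriv_eq]
  -- pW pV pV H
  have hP : ∀ x : ℝ, 0 < x → ∀ y, pW (pV (pV H)) x y = 0 := by
    intro x hx y
    have heq : (fun s => pV (pV H) x s) = fun _ => x⁻¹ := funext fun s => hB x hx s
    rw [show pW (pV (pV H)) x y = deriv (fun s => pV (pV H) x s) y from rfl, heq, deriv_const]
  -- pW pW pV pV H
  have hQ : pW (pW (pV (pV H))) v w = 0 := by
    have heq : (fun s => pW (pV (pV H)) v s) = fun _ => (0 : ℝ) :=
      funext fun s => hP v hv s
    rw [show pW (pW (pV (pV H))) v w = deriv (fun s => pW (pV (pV H)) v s) w from rfl, heq,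
      deriv_const]
  -- pW pV pV pV H
  have hR : pW (pV (pV (pV H))) v w = 0 := by
    have heq : (fun s => pV (pV (pV H)) v s) = fun _ => -(v ^ 2)⁻¹ :=
      funext fun s => hC v hv s
    rw [show pW (pV (pV (pV H))) v w = deriv (fun s => pV (pV (pV H)) v s) w from rfl, heq,
      deriv_const]
  -- the ODE in terms of iterated deriv
  have hode : deriv (deriv (deriv (deriv g))) w = 6 * (deriv (deriv g) w) ^ 2 := by
    have := hgode w hw
    rwa [iteratedDeriv_eq_iterate, iteratedDeriv_eq_iterate] at this
  have hv2 : (v : ℝ) ≠ 0 := ne_of_gt hv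
  refine ⟨?_, ?_, ?_, ?_, ?_⟩
  · rw [hD, hB v hv w, hC v hv w]
    field_simp
  · rw [hR, hB v hv w, hP v hv w, hC v hv w]
    ring
  · rw [hQ, hB v hv w, hP v hv w]
    ring
  · rw [hN, hB v hv w, hM v hv2 w hw, hP v hv w, hG v w hw, hC v hv w]
    field_simp
    ring
  · rw [hK, hB v hv w, hM v hv2 w hw, hG v w hw, hP v hv w, hode]
    field_simp
    ring
end

section
/- Suppose H : U → ℝ is smooth on a connected open set U ⊆ ℝ², satisfies the five integrability conditions H_VVVV·H_VV = 2H_VVV², H_VVVW·H_VV = 2H_VVW·H_VVV, H_VVWW·H_VV = 2H_VVW², H_VWWW·H_VV = 3H_VWW·H_VVW − H_WWW·H_VVV, H_WWWW·H_VV = 6H_VWW² − 4H_WWW·H_VVW, and define H̃(V,W) = α·H(aV + bW + p, cW + d) + β·W² + γ·VW + ε·V + κ·W + η for constants a,b,c,d,p,α,β,γ,ε,κ,η with a ≠ 0, c ≠ 0, α ≠ 0. Then H̃ satisfies the same five integrability conditions on the preimage of U under the affine map (V,W) ↦ (aV+bW+p, cW+d). -/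
open Filter Topology ContinuousLinearMap
open scoped ContDiff

noncomputable def d1 (F : ℝ × ℝ → ℝ) : ℝ × ℝ → ℝ := fun q => fderiv ℝ F q (1, 0)
noncomputable def d2 (F : ℝ × ℝ → ℝ) : ℝ × ℝ → ℝ := fun q => fderiv ℝ F q (0, 1)

lemma eval_pair (T : ℝ × ℝ →L[ℝ] ℝ) (s t : ℝ) : T (s, t) = s * T (1, 0) + t * T (0, 1) := by
  have h : (s, t) = s • ((1, 0) : ℝ × ℝ) + t • ((0, 1) : ℝ × ℝ) := by
    simp [Prod.ext_iff]
  rw [h, map_add, map_smul, map_smul, smul_eq_mul, smul_eq_mul]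

section

variable {U : Set (ℝ × ℝ)}

lemma diffAt {E : Type*} [NormedAddCommGroup E] [NormedSpace ℝ E]
    (hU : IsOpen U) {F : ℝ × ℝ → E} (hF : ContDiffOn ℝ ∞ F U) {q : ℝ × ℝ} (hq : q ∈ U) :
    DifferentiableAt ℝ F q :=
  (hF.contDiffAt (hU.mem_nhds hq)).differentiableAt (by simp)

lemma smooth_d1 (hU : IsOpen U) {F : ℝ × ℝ → ℝ} (hF : ContDiffOn ℝ ∞ F U) :
    ContDiffOn ℝ ∞ (d1 F) U :=
  (hF.fderiv_of_isOpen hU (by norm_num)).clm_apply contDiffOn_const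

lemma smooth_d2 (hU : IsOpen U) {F : ℝ × ℝ → ℝ} (hF : ContDiffOn ℝ ∞ F U) :
    ContDiffOn ℝ ∞ (d2 F) U :=
  (hF.fderiv_of_isOpen hU (by norm_num)).clm_apply contDiffOn_const

lemma dcongr1 (hU : IsOpen U) {f g : ℝ × ℝ → ℝ} (h : ∀ r ∈ U, f r = g r) {q : ℝ × ℝ}
    (hq : q ∈ U) : d1 f q = d1 g q := by
  have := (Filter.eventuallyEq_of_mem (hU.mem_nhds hq) h).fderiv_eq (𝕜 := ℝ)
  simp only [d1, this]

lemma dcongr2 (hU : IsOpen U) {f g : ℝ × ℝ → ℝ} (h : ∀ r ∈ U, f r = g r) {q : ℝ × ℝ}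
    (hq : q ∈ U) : d2 f q = d2 g q := by
  have := (Filter.eventuallyEq_of_mem (hU.mem_nhds hq) h).fderiv_eq (𝕜 := ℝ)
  simp only [d2, this]

lemma d_symm (hU : IsOpen U) {F : ℝ × ℝ → ℝ} (hF : ContDiffOn ℝ ∞ F U) {q : ℝ × ℝ}
    (hq : q ∈ U) : d1 (d2 F) q = d2 (d1 F) q := by
  have hCA : ContDiffAt ℝ ∞ F q := hF.contDiffAt (hU.mem_nhds hq)
  have hsymm : IsSymmSndFDerivAt ℝ F q := hCA.isSymmSndFDerivAt (by simp; exact WithTop.coe_le_coe.mpr le_top)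
  have hdd : DifferentiableAt ℝ (fderiv ℝ F) q :=
    diffAt hU (hF.fderiv_of_isOpen hU (by norm_num)) hq
  have h1 : fderiv ℝ (fun x => fderiv ℝ F x (0, 1)) q =
      (fderiv ℝ (fderiv ℝ F) q).flip (0, 1) := by
    rw [fderiv_clm_apply hdd (differentiableAt_const _)]
    simp
  have h2 : fderiv ℝ (fun x => fderiv ℝ F x (1, 0)) q =
      (fderiv ℝ (fderiv ℝ F) q).flip (1, 0) := by
    rw [fderiv_clm_apply hdd (differentiableAt_const _)]
    simp
  show fderiv ℝ (fun x => fderiv ℝ F x (0, 1)) q (1, 0) =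
    fderiv ℝ (fun x => fderiv ℝ F x (1, 0)) q (0, 1)
  rw [h1, h2]
  exact hsymm (1, 0) (0, 1)

lemma pV_eq (hU : IsOpen U) {f : ℝ → ℝ → ℝ} {F : ℝ × ℝ → ℝ} (hF : ContDiffOn ℝ ∞ F U)
    (hfF : ∀ r ∈ U, f r.1 r.2 = F r) {q : ℝ × ℝ} (hq : q ∈ U) :
    pV f q.1 q.2 = d1 F q := by
  have hcont : Continuous fun x : ℝ => (x, q.2) := by fun_prop
  have h1 : ∀ᶠ x in 𝓝 q.1, (x, q.2) ∈ U :=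
    hcont.continuousAt.preimage_mem_nhds (hU.mem_nhds (by simpa using hq))
  have heq : (fun x => f x q.2) =ᶠ[𝓝 q.1] fun x => F (x, q.2) :=
    h1.mono fun x hx => hfF (x, q.2) hx
  have hD : HasDerivAt (fun x => F (x, q.2)) (fderiv ℝ F q (1, 0)) q.1 := by
    have hd := (diffAt hU hF hq).hasFDerivAt
    exact hd.comp_hasDerivAt q.1 ((hasDerivAt_id q.1).prodMk (hasDerivAt_const q.1 q.2))
  show deriv (fun x => f x q.2) q.1 = _
  rw [heq.deriv_eq, hD.deriv]
  rfl

lemma pW_eq (hU : IsOpen U) {f : ℝ → ℝ → ℝ} {F : ℝ × ℝ → ℝ} (hF : ContDiffOn ℝ ∞ F U)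
    (hfF : ∀ r ∈ U, f r.1 r.2 = F r) {q : ℝ × ℝ} (hq : q ∈ U) :
    pW f q.1 q.2 = d2 F q := by
  have hcont : Continuous fun y : ℝ => (q.1, y) := by fun_prop
  have h1 : ∀ᶠ y in 𝓝 q.2, (q.1, y) ∈ U :=
    hcont.continuousAt.preimage_mem_nhds (hU.mem_nhds (by simpa using hq))
  have heq : (fun y => f q.1 y) =ᶠ[𝓝 q.2] fun y => F (q.1, y) :=
    h1.mono fun y hy => hfF (q.1, y) hy
  have hD : HasDerivAt (fun y => F (q.1, y)) (fderiv ℝ F q (0, 1)) q.2 := by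
    have hd := (diffAt hU hF hq).hasFDerivAt
    exact hd.comp_hasDerivAt q.2 ((hasDerivAt_const q.2 q.1).prodMk (hasDerivAt_id q.2))
  show deriv (fun y => f q.1 y) q.2 = _
  rw [heq.deriv_eq, hD.deriv]
  rfl

end

/-- the affine map -/
def Amap (a b c p0 d : ℝ) : ℝ × ℝ → ℝ × ℝ := fun x => (a * x.1 + b * x.2 + p0, c * x.2 + d)

noncomputable def Lmap (a b c : ℝ) : ℝ × ℝ →L[ℝ] ℝ × ℝ :=
  ((a • fst ℝ ℝ ℝ) + (b • snd ℝ ℝ ℝ)).prod (c • snd ℝ ℝ ℝ)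

lemma hasFDerivAt_Amap (a b c p0 d : ℝ) (q : ℝ × ℝ) :
    HasFDerivAt (Amap a b c p0 d) (Lmap a b c) q := by
  have h : Amap a b c p0 d = fun x => Lmap a b c x + (p0, d) := by
    funext x
    simp [Amap, Lmap, Prod.ext_iff]
  rw [h]
  exact (Lmap a b c).hasFDerivAt.add_const (p0, d)

lemma Lmap_e1 (a b c : ℝ) : Lmap a b c (1, 0) = (a, 0) := by simp [Lmap]
lemma Lmap_e2 (a b c : ℝ) : Lmap a b c (0, 1) = (b, c) := by simp [Lmap]

section key

variable {U : Set (ℝ × ℝ)} (a b c p0 d : ℝ)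

lemma key_eval1 (r : ℝ × ℝ) (G : ℝ × ℝ → ℝ) :
    fderiv ℝ G (Amap a b c p0 d r) (a, 0) = a * d1 G (Amap a b c p0 d r) := by
  rw [eval_pair]; simp [d1]

lemma key_eval2 (r : ℝ × ℝ) (G : ℝ × ℝ → ℝ) :
    fderiv ℝ G (Amap a b c p0 d r) (b, c) =
      b * d1 G (Amap a b c p0 d r) + c * d2 G (Amap a b c p0 d r) := by
  rw [eval_pair]; rfl

lemma key_hasFDerivAt (hU : IsOpen U) (G1 G2 G3 G4 : ℝ × ℝ → ℝ) (hG1 : ContDiffOn ℝ ∞ G1 U)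
    (hG2 : ContDiffOn ℝ ∞ G2 U) (hG3 : ContDiffOn ℝ ∞ G3 U) (hG4 : ContDiffOn ℝ ∞ G4 U)
    (s1 s2 s3 s4 c0 c1 c2 c3 c4 : ℝ) (r : ℝ × ℝ) (hr : Amap a b c p0 d r ∈ U) :
    HasFDerivAt (fun x => s1 * G1 (Amap a b c p0 d x) + s2 * G2 (Amap a b c p0 d x) +
        s3 * G3 (Amap a b c p0 d x) + s4 * G4 (Amap a b c p0 d x) +
        (c0 + c1 * x.1 + c2 * x.2 + c3 * (x.2 * x.2) + c4 * (x.1 * x.2)))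
      ((s1 • ((fderiv ℝ G1 (Amap a b c p0 d r)).comp (Lmap a b c)) +
        s2 • ((fderiv ℝ G2 (Amap a b c p0 d r)).comp (Lmap a b c)) +
        s3 • ((fderiv ℝ G3 (Amap a b c p0 d r)).comp (Lmap a b c)) +
        s4 • ((fderiv ℝ G4 (Amap a b c p0 d r)).comp (Lmap a b c))) +
        (c1 • fst ℝ ℝ ℝ + c2 • snd ℝ ℝ ℝ +
          c3 • (r.2 • snd ℝ ℝ ℝ + r.2 • snd ℝ ℝ ℝ) +
          c4 • (r.1 • snd ℝ ℝ ℝ + r.2 • fst ℝ ℝ ℝ))) r := by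
  have hA := hasFDerivAt_Amap a b c p0 d r
  have h1 : HasFDerivAt (fun x => G1 (Amap a b c p0 d x))
      ((fderiv ℝ G1 (Amap a b c p0 d r)).comp (Lmap a b c)) r :=
    ((diffAt hU hG1 hr).hasFDerivAt).comp r hA
  have h2 : HasFDerivAt (fun x => G2 (Amap a b c p0 d x))
      ((fderiv ℝ G2 (Amap a b c p0 d r)).comp (Lmap a b c)) r :=
    ((diffAt hU hG2 hr).hasFDerivAt).comp r hA
  have h3 : HasFDerivAt (fun x => G3 (Amap a b c p0 d x))
      ((fderiv ℝ G3 (Amap a b c p0 d r)).comp (Lmap a b c)) r :=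
    ((diffAt hU hG3 hr).hasFDerivAt).comp r hA
  have h4 : HasFDerivAt (fun x => G4 (Amap a b c p0 d x))
      ((fderiv ℝ G4 (Amap a b c p0 d r)).comp (Lmap a b c)) r :=
    ((diffAt hU hG4 hr).hasFDerivAt).comp r hA
  have hp : HasFDerivAt (fun x : ℝ × ℝ =>
      c0 + c1 * x.1 + c2 * x.2 + c3 * (x.2 * x.2) + c4 * (x.1 * x.2))
      (c1 • fst ℝ ℝ ℝ + c2 • snd ℝ ℝ ℝ +
        c3 • (r.2 • snd ℝ ℝ ℝ + r.2 • snd ℝ ℝ ℝ) +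
        c4 • (r.1 • snd ℝ ℝ ℝ + r.2 • fst ℝ ℝ ℝ)) r := by
    exact ((((hasFDerivAt_fst.const_mul c1).const_add c0).add
      (hasFDerivAt_snd.const_mul c2)).add
      ((hasFDerivAt_snd.mul hasFDerivAt_snd).const_mul c3)).add
      ((hasFDerivAt_fst.mul hasFDerivAt_snd).const_mul c4)
  exact ((((h1.const_mul s1).add (h2.const_mul s2)).add (h3.const_mul s3)).add
    (h4.const_mul s4)).add hp

lemma key1 (hU : IsOpen U) (G1 G2 G3 G4 : ℝ × ℝ → ℝ) (hG1 : ContDiffOn ℝ ∞ G1 U)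
    (hG2 : ContDiffOn ℝ ∞ G2 U) (hG3 : ContDiffOn ℝ ∞ G3 U) (hG4 : ContDiffOn ℝ ∞ G4 U)
    (s1 s2 s3 s4 c0 c1 c2 c3 c4 : ℝ) (r : ℝ × ℝ) (hr : Amap a b c p0 d r ∈ U) :
    d1 (fun x => s1 * G1 (Amap a b c p0 d x) + s2 * G2 (Amap a b c p0 d x) +
        s3 * G3 (Amap a b c p0 d x) + s4 * G4 (Amap a b c p0 d x) +
        (c0 + c1 * x.1 + c2 * x.2 + c3 * (x.2 * x.2) + c4 * (x.1 * x.2))) r =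
      a * (s1 * d1 G1 (Amap a b c p0 d r) + s2 * d1 G2 (Amap a b c p0 d r) +
        s3 * d1 G3 (Amap a b c p0 d r) + s4 * d1 G4 (Amap a b c p0 d r)) +
      (c1 + c4 * r.2) := by
  have hS := key_hasFDerivAt a b c p0 d hU G1 G2 G3 G4 hG1 hG2 hG3 hG4
    s1 s2 s3 s4 c0 c1 c2 c3 c4 r hr
  show fderiv ℝ _ r (1, 0) = _
  rw [hS.fderiv]
  simp only [ContinuousLinearMap.add_apply, ContinuousLinearMap.smul_apply,
    ContinuousLinearMap.comp_apply, Lmap_e1, key_eval1, ContinuousLinearMap.coe_fst',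
    ContinuousLinearMap.coe_snd', smul_eq_mul]
  ring

lemma key2 (hU : IsOpen U) (G1 G2 G3 G4 : ℝ × ℝ → ℝ) (hG1 : ContDiffOn ℝ ∞ G1 U)
    (hG2 : ContDiffOn ℝ ∞ G2 U) (hG3 : ContDiffOn ℝ ∞ G3 U) (hG4 : ContDiffOn ℝ ∞ G4 U)
    (s1 s2 s3 s4 c0 c1 c2 c3 c4 : ℝ) (r : ℝ × ℝ) (hr : Amap a b c p0 d r ∈ U) :
    d2 (fun x => s1 * G1 (Amap a b c p0 d x) + s2 * G2 (Amap a b c p0 d x) +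
        s3 * G3 (Amap a b c p0 d x) + s4 * G4 (Amap a b c p0 d x) +
        (c0 + c1 * x.1 + c2 * x.2 + c3 * (x.2 * x.2) + c4 * (x.1 * x.2))) r =
      b * (s1 * d1 G1 (Amap a b c p0 d r) + s2 * d1 G2 (Amap a b c p0 d r) +
        s3 * d1 G3 (Amap a b c p0 d r) + s4 * d1 G4 (Amap a b c p0 d r)) +
      c * (s1 * d2 G1 (Amap a b c p0 d r) + s2 * d2 G2 (Amap a b c p0 d r) +
        s3 * d2 G3 (Amap a b c p0 d r) + s4 * d2 G4 (Amap a b c p0 d r)) +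
      (c2 + 2 * c3 * r.2 + c4 * r.1) := by
  have hS := key_hasFDerivAt a b c p0 d hU G1 G2 G3 G4 hG1 hG2 hG3 hG4
    s1 s2 s3 s4 c0 c1 c2 c3 c4 r hr
  show fderiv ℝ _ r (0, 1) = _
  rw [hS.fderiv]
  simp only [ContinuousLinearMap.add_apply, ContinuousLinearMap.smul_apply,
    ContinuousLinearMap.comp_apply, Lmap_e2, key_eval2, ContinuousLinearMap.coe_fst',
    ContinuousLinearMap.coe_snd', smul_eq_mul]
  ring

end key

noncomputable def Fu (H : ℝ → ℝ → ℝ) : ℝ × ℝ → ℝ := fun q => H q.1 q.2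

noncomputable def Ftu (H : ℝ → ℝ → ℝ) (a b c p0 d α β γ ε κ η : ℝ) : ℝ × ℝ → ℝ :=
  fun x => α * H (a * x.1 + b * x.2 + p0) (c * x.2 + d) +
    β * x.2 ^ 2 + γ * x.1 * x.2 + ε * x.1 + κ * x.2 + η

theorem stmt_7 (U : Set (ℝ × ℝ)) (hUopen : IsOpen U) (hUconn : IsConnected U)
    (H : ℝ → ℝ → ℝ)
    (hH : ContDiffOn ℝ (⊤ : ℕ∞) (fun q : ℝ × ℝ => H q.1 q.2) U)
    (hint : ∀ q ∈ U, IntCond H q.1 q.2)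
    (a b c d p0 α β γ ε κ η : ℝ) (ha : a ≠ 0) (hc : c ≠ 0) (hα : α ≠ 0) :
    ∀ V W : ℝ, (a * V + b * W + p0, c * W + d) ∈ U →
      IntCond (fun V W =>
        α * H (a * V + b * W + p0) (c * W + d) +
          β * W ^ 2 + γ * V * W + ε * V + κ * W + η) V W := by
  intro V W hmem
  have hH' : ContDiffOn ℝ ∞ (Fu H) U := hH.of_le (by simp)
  have hUt : IsOpen ((Amap a b c p0 d) ⁻¹' U) := hUopen.preimage (by unfold Amap; fun_prop)
  have hA : ContDiff ℝ ∞ (Amap a b c p0 d) := by unfold Amap; fun_prop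
  have hcomp : ContDiffOn ℝ ∞ (fun x => (Fu H) ((Amap a b c p0 d) x)) ((Amap a b c p0 d) ⁻¹' U) :=
    ContDiffOn.comp hH' hA.contDiffOn (fun x hx => hx)
  have hpoly : ContDiff ℝ ∞ (fun x : ℝ × ℝ =>
      β * x.2 ^ 2 + γ * x.1 * x.2 + ε * x.1 + κ * x.2 + η) := by fun_prop
  have hFt : ContDiffOn ℝ ∞ (Ftu H a b c p0 d α β γ ε κ η) ((Amap a b c p0 d) ⁻¹' U) :=
    ((contDiffOn_const.mul hcomp).add hpoly.contDiffOn).congr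
      (fun x hx => by simp only [Ftu, Fu, Amap]; ring)

  have fsm1 : ContDiffOn ℝ ∞ (d1 (Fu H)) U := smooth_d1 hUopen hH'
  have fsm2 : ContDiffOn ℝ ∞ (d2 (Fu H)) U := smooth_d2 hUopen hH'
  have fsm11 : ContDiffOn ℝ ∞ (d1 (d1 (Fu H))) U := smooth_d1 hUopen fsm1
  have fsm21 : ContDiffOn ℝ ∞ (d2 (d1 (Fu H))) U := smooth_d2 hUopen fsm1
  have fsm22 : ContDiffOn ℝ ∞ (d2 (d2 (Fu H))) U := smooth_d2 hUopen fsm2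
  have fsm111 : ContDiffOn ℝ ∞ (d1 (d1 (d1 (Fu H)))) U := smooth_d1 hUopen fsm11
  have fsm211 : ContDiffOn ℝ ∞ (d2 (d1 (d1 (Fu H)))) U := smooth_d2 hUopen fsm11
  have fsm221 : ContDiffOn ℝ ∞ (d2 (d2 (d1 (Fu H)))) U := smooth_d2 hUopen fsm21
  have fsm222 : ContDiffOn ℝ ∞ (d2 (d2 (d2 (Fu H)))) U := smooth_d2 hUopen fsm22
  have tsm1 : ContDiffOn ℝ ∞ (d1 (Ftu H a b c p0 d α β γ ε κ η)) ((Amap a b c p0 d) ⁻¹' U) := smooth_d1 hUt hFt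
  have tsm2 : ContDiffOn ℝ ∞ (d2 (Ftu H a b c p0 d α β γ ε κ η)) ((Amap a b c p0 d) ⁻¹' U) := smooth_d2 hUt hFt
  have tsm11 : ContDiffOn ℝ ∞ (d1 (d1 (Ftu H a b c p0 d α β γ ε κ η))) ((Amap a b c p0 d) ⁻¹' U) := smooth_d1 hUt tsm1
  have tsm21 : ContDiffOn ℝ ∞ (d2 (d1 (Ftu H a b c p0 d α β γ ε κ η))) ((Amap a b c p0 d) ⁻¹' U) := smooth_d2 hUt tsm1
  have tsm22 : ContDiffOn ℝ ∞ (d2 (d2 (Ftu H a b c p0 d α β γ ε κ η))) ((Amap a b c p0 d) ⁻¹' U) := smooth_d2 hUt tsm2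
  have tsm111 : ContDiffOn ℝ ∞ (d1 (d1 (d1 (Ftu H a b c p0 d α β γ ε κ η)))) ((Amap a b c p0 d) ⁻¹' U) := smooth_d1 hUt tsm11
  have tsm211 : ContDiffOn ℝ ∞ (d2 (d1 (d1 (Ftu H a b c p0 d α β γ ε κ η)))) ((Amap a b c p0 d) ⁻¹' U) := smooth_d2 hUt tsm11
  have tsm221 : ContDiffOn ℝ ∞ (d2 (d2 (d1 (Ftu H a b c p0 d α β γ ε κ η)))) ((Amap a b c p0 d) ⁻¹' U) := smooth_d2 hUt tsm21
  have tsm222 : ContDiffOn ℝ ∞ (d2 (d2 (d2 (Ftu H a b c p0 d α β γ ε κ η)))) ((Amap a b c p0 d) ⁻¹' U) := smooth_d2 hUt tsm22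
  have sy11 : ∀ s ∈ U, (d1 (d2 (Fu H))) s = (d2 (d1 (Fu H))) s := fun s hs => d_symm hUopen hH' hs
  have sy21 : ∀ s ∈ U, (d1 (d2 (d1 (Fu H)))) s = (d2 (d1 (d1 (Fu H)))) s := fun s hs => d_symm hUopen fsm1 hs
  have sy31 : ∀ s ∈ U, (d1 (d2 (d1 (d1 (Fu H))))) s = (d2 (d1 (d1 (d1 (Fu H))))) s := fun s hs => d_symm hUopen fsm11 hs
  have sy12 : ∀ s ∈ U, (d1 (d2 (d2 (Fu H)))) s = (d2 (d2 (d1 (Fu H)))) s := fun s hs => (d_symm hUopen fsm2 hs).trans (dcongr2 hUopen sy11 hs)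
  have sy22 : ∀ s ∈ U, (d1 (d2 (d2 (d1 (Fu H))))) s = (d2 (d2 (d1 (d1 (Fu H))))) s := fun s hs => (d_symm hUopen fsm21 hs).trans (dcongr2 hUopen sy21 hs)
  have sy13 : ∀ s ∈ U, (d1 (d2 (d2 (d2 (Fu H))))) s = (d2 (d2 (d2 (d1 (Fu H))))) s := fun s hs => (d_symm hUopen fsm22 hs).trans (dcongr2 hUopen sy12 hs)
  have c10 : ∀ s ∈ U, (pV H) s.1 s.2 = (d1 (Fu H)) s := fun s hs => pV_eq hUopen hH' (fun _ _ => rfl) hs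
  have c01 : ∀ s ∈ U, (pW H) s.1 s.2 = (d2 (Fu H)) s := fun s hs => pW_eq hUopen hH' (fun _ _ => rfl) hs
  have c20 : ∀ s ∈ U, (pV (pV H)) s.1 s.2 = (d1 (d1 (Fu H))) s := fun s hs => pV_eq hUopen fsm1 c10 hs
  have c11 : ∀ s ∈ U, (pW (pV H)) s.1 s.2 = (d2 (d1 (Fu H))) s := fun s hs => pW_eq hUopen fsm1 c10 hs
  have c02 : ∀ s ∈ U, (pW (pW H)) s.1 s.2 = (d2 (d2 (Fu H))) s := fun s hs => pW_eq hUopen fsm2 c01 hs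
  have c30 : ∀ s ∈ U, (pV (pV (pV H))) s.1 s.2 = (d1 (d1 (d1 (Fu H)))) s := fun s hs => pV_eq hUopen fsm11 c20 hs
  have c21 : ∀ s ∈ U, (pW (pV (pV H))) s.1 s.2 = (d2 (d1 (d1 (Fu H)))) s := fun s hs => pW_eq hUopen fsm11 c20 hs
  have c12 : ∀ s ∈ U, (pW (pW (pV H))) s.1 s.2 = (d2 (d2 (d1 (Fu H)))) s := fun s hs => pW_eq hUopen fsm21 c11 hs
  have c03 : ∀ s ∈ U, (pW (pW (pW H))) s.1 s.2 = (d2 (d2 (d2 (Fu H)))) s := fun s hs => pW_eq hUopen fsm22 c02 hs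
  have c40 : ∀ s ∈ U, (pV (pV (pV (pV H)))) s.1 s.2 = (d1 (d1 (d1 (d1 (Fu H))))) s := fun s hs => pV_eq hUopen fsm111 c30 hs
  have c31 : ∀ s ∈ U, (pW (pV (pV (pV H)))) s.1 s.2 = (d2 (d1 (d1 (d1 (Fu H))))) s := fun s hs => pW_eq hUopen fsm111 c30 hs
  have c22 : ∀ s ∈ U, (pW (pW (pV (pV H)))) s.1 s.2 = (d2 (d2 (d1 (d1 (Fu H))))) s := fun s hs => pW_eq hUopen fsm211 c21 hs
  have c13 : ∀ s ∈ U, (pW (pW (pW (pV H)))) s.1 s.2 = (d2 (d2 (d2 (d1 (Fu H))))) s := fun s hs => pW_eq hUopen fsm221 c12 hs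
  have c04 : ∀ s ∈ U, (pW (pW (pW (pW H)))) s.1 s.2 = (d2 (d2 (d2 (d2 (Fu H))))) s := fun s hs => pW_eq hUopen fsm222 c03 hs
  have k10 : ∀ s ∈ ((Amap a b c p0 d) ⁻¹' U), (pV (fun V W => α * H (a * V + b * W + p0) (c * W + d) + β * W ^ 2 + γ * V * W + ε * V + κ * W + η)) s.1 s.2 = (d1 (Ftu H a b c p0 d α β γ ε κ η)) s := fun s hs => pV_eq hUt hFt (fun _ _ => rfl) hs
  have k01 : ∀ s ∈ ((Amap a b c p0 d) ⁻¹' U), (pW (fun V W => α * H (a * V + b * W + p0) (c * W + d) + β * W ^ 2 + γ * V * W + ε * V + κ * W + η)) s.1 s.2 = (d2 (Ftu H a b c p0 d α β γ ε κ η)) s := fun s hs => pW_eq hUt hFt (fun _ _ => rfl) hs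
  have k20 : ∀ s ∈ ((Amap a b c p0 d) ⁻¹' U), (pV (pV (fun V W => α * H (a * V + b * W + p0) (c * W + d) + β * W ^ 2 + γ * V * W + ε * V + κ * W + η))) s.1 s.2 = (d1 (d1 (Ftu H a b c p0 d α β γ ε κ η))) s := fun s hs => pV_eq hUt tsm1 k10 hs
  have k11 : ∀ s ∈ ((Amap a b c p0 d) ⁻¹' U), (pW (pV (fun V W => α * H (a * V + b * W + p0) (c * W + d) + β * W ^ 2 + γ * V * W + ε * V + κ * W + η))) s.1 s.2 = (d2 (d1 (Ftu H a b c p0 d α β γ ε κ η))) s := fun s hs => pW_eq hUt tsm1 k10 hs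
  have k02 : ∀ s ∈ ((Amap a b c p0 d) ⁻¹' U), (pW (pW (fun V W => α * H (a * V + b * W + p0) (c * W + d) + β * W ^ 2 + γ * V * W + ε * V + κ * W + η))) s.1 s.2 = (d2 (d2 (Ftu H a b c p0 d α β γ ε κ η))) s := fun s hs => pW_eq hUt tsm2 k01 hs
  have k30 : ∀ s ∈ ((Amap a b c p0 d) ⁻¹' U), (pV (pV (pV (fun V W => α * H (a * V + b * W + p0) (c * W + d) + β * W ^ 2 + γ * V * W + ε * V + κ * W + η)))) s.1 s.2 = (d1 (d1 (d1 (Ftu H a b c p0 d α β γ ε κ η)))) s := fun s hs => pV_eq hUt tsm11 k20 hs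
  have k21 : ∀ s ∈ ((Amap a b c p0 d) ⁻¹' U), (pW (pV (pV (fun V W => α * H (a * V + b * W + p0) (c * W + d) + β * W ^ 2 + γ * V * W + ε * V + κ * W + η)))) s.1 s.2 = (d2 (d1 (d1 (Ftu H a b c p0 d α β γ ε κ η)))) s := fun s hs => pW_eq hUt tsm11 k20 hs
  have k12 : ∀ s ∈ ((Amap a b c p0 d) ⁻¹' U), (pW (pW (pV (fun V W => α * H (a * V + b * W + p0) (c * W + d) + β * W ^ 2 + γ * V * W + ε * V + κ * W + η)))) s.1 s.2 = (d2 (d2 (d1 (Ftu H a b c p0 d α β γ ε κ η)))) s := fun s hs => pW_eq hUt tsm21 k11 hs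
  have k03 : ∀ s ∈ ((Amap a b c p0 d) ⁻¹' U), (pW (pW (pW (fun V W => α * H (a * V + b * W + p0) (c * W + d) + β * W ^ 2 + γ * V * W + ε * V + κ * W + η)))) s.1 s.2 = (d2 (d2 (d2 (Ftu H a b c p0 d α β γ ε κ η)))) s := fun s hs => pW_eq hUt tsm22 k02 hs
  have k40 : ∀ s ∈ ((Amap a b c p0 d) ⁻¹' U), (pV (pV (pV (pV (fun V W => α * H (a * V + b * W + p0) (c * W + d) + β * W ^ 2 + γ * V * W + ε * V + κ * W + η))))) s.1 s.2 = (d1 (d1 (d1 (d1 (Ftu H a b c p0 d α β γ ε κ η))))) s := fun s hs => pV_eq hUt tsm111 k30 hs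
  have k31 : ∀ s ∈ ((Amap a b c p0 d) ⁻¹' U), (pW (pV (pV (pV (fun V W => α * H (a * V + b * W + p0) (c * W + d) + β * W ^ 2 + γ * V * W + ε * V + κ * W + η))))) s.1 s.2 = (d2 (d1 (d1 (d1 (Ftu H a b c p0 d α β γ ε κ η))))) s := fun s hs => pW_eq hUt tsm111 k30 hs
  have k22 : ∀ s ∈ ((Amap a b c p0 d) ⁻¹' U), (pW (pW (pV (pV (fun V W => α * H (a * V + b * W + p0) (c * W + d) + β * W ^ 2 + γ * V * W + ε * V + κ * W + η))))) s.1 s.2 = (d2 (d2 (d1 (d1 (Ftu H a b c p0 d α β γ ε κ η))))) s := fun s hs => pW_eq hUt tsm211 k21 hs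
  have k13 : ∀ s ∈ ((Amap a b c p0 d) ⁻¹' U), (pW (pW (pW (pV (fun V W => α * H (a * V + b * W + p0) (c * W + d) + β * W ^ 2 + γ * V * W + ε * V + κ * W + η))))) s.1 s.2 = (d2 (d2 (d2 (d1 (Ftu H a b c p0 d α β γ ε κ η))))) s := fun s hs => pW_eq hUt tsm221 k12 hs
  have k04 : ∀ s ∈ ((Amap a b c p0 d) ⁻¹' U), (pW (pW (pW (pW (fun V W => α * H (a * V + b * W + p0) (c * W + d) + β * W ^ 2 + γ * V * W + ε * V + κ * W + η))))) s.1 s.2 = (d2 (d2 (d2 (d2 (Ftu H a b c p0 d α β γ ε κ η))))) s := fun s hs => pW_eq hUt tsm222 k03 hs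
  have hu10 : ∀ r ∈ ((Amap a b c p0 d) ⁻¹' U), (d1 (Ftu H a b c p0 d α β γ ε κ η)) r = α * a * (d1 (Fu H)) ((Amap a b c p0 d) r) + (γ * r.2 + ε) := by
    intro r hr
    have e : (d1 (Ftu H a b c p0 d α β γ ε κ η)) r = (d1 (fun x => α * (Fu H) ((Amap a b c p0 d) x) + 0 * (Fu H) ((Amap a b c p0 d) x) + 0 * (Fu H) ((Amap a b c p0 d) x) + 0 * (Fu H) ((Amap a b c p0 d) x) + (η + ε * x.1 + κ * x.2 + β * (x.2 * x.2) + γ * (x.1 * x.2)))) r :=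
      dcongr1 hUt (fun x hx => by simp only [Ftu, Fu, Amap]; ring) hr
    rw [e, key1 a b c p0 d hUopen _ _ _ _ hH' hH' hH' hH' α 0 0 0 η ε κ β γ r hr]
    ring
  have hu01 : ∀ r ∈ ((Amap a b c p0 d) ⁻¹' U), (d2 (Ftu H a b c p0 d α β γ ε κ η)) r = α * b * (d1 (Fu H)) ((Amap a b c p0 d) r) + α * c * (d2 (Fu H)) ((Amap a b c p0 d) r) + (2 * β * r.2 + γ * r.1 + κ) := by
    intro r hr
    have e : (d2 (Ftu H a b c p0 d α β γ ε κ η)) r = (d2 (fun x => α * (Fu H) ((Amap a b c p0 d) x) + 0 * (Fu H) ((Amap a b c p0 d) x) + 0 * (Fu H) ((Amap a b c p0 d) x) + 0 * (Fu H) ((Amap a b c p0 d) x) + (η + ε * x.1 + κ * x.2 + β * (x.2 * x.2) + γ * (x.1 * x.2)))) r :=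
      dcongr2 hUt (fun x hx => by simp only [Ftu, Fu, Amap]; ring) hr
    rw [e, key2 a b c p0 d hUopen _ _ _ _ hH' hH' hH' hH' α 0 0 0 η ε κ β γ r hr]
    ring
  have hu20 : ∀ r ∈ ((Amap a b c p0 d) ⁻¹' U), (d1 (d1 (Ftu H a b c p0 d α β γ ε κ η))) r = α * a ^ 2 * (d1 (d1 (Fu H))) ((Amap a b c p0 d) r) := by
    intro r hr
    have e : (d1 (d1 (Ftu H a b c p0 d α β γ ε κ η))) r = (d1 (fun x => (α * a) * (d1 (Fu H)) ((Amap a b c p0 d) x) + 0 * (d1 (Fu H)) ((Amap a b c p0 d) x) + 0 * (d1 (Fu H)) ((Amap a b c p0 d) x) + 0 * (d1 (Fu H)) ((Amap a b c p0 d) x) + (ε + 0 * x.1 + γ * x.2 + 0 * (x.2 * x.2) + 0 * (x.1 * x.2)))) r :=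
      dcongr1 hUt (fun x hx => by rw [hu10 x hx]; ring) hr
    rw [e, key1 a b c p0 d hUopen _ _ _ _ fsm1 fsm1 fsm1 fsm1 (α * a) 0 0 0 ε 0 γ 0 0 r hr]
    ring
  have hu11 : ∀ r ∈ ((Amap a b c p0 d) ⁻¹' U), (d2 (d1 (Ftu H a b c p0 d α β γ ε κ η))) r = α * (a * b) * (d1 (d1 (Fu H))) ((Amap a b c p0 d) r) + α * (a * c) * (d2 (d1 (Fu H))) ((Amap a b c p0 d) r) + γ := by
    intro r hr
    have e : (d2 (d1 (Ftu H a b c p0 d α β γ ε κ η))) r = (d2 (fun x => (α * a) * (d1 (Fu H)) ((Amap a b c p0 d) x) + 0 * (d1 (Fu H)) ((Amap a b c p0 d) x) + 0 * (d1 (Fu H)) ((Amap a b c p0 d) x) + 0 * (d1 (Fu H)) ((Amap a b c p0 d) x) + (ε + 0 * x.1 + γ * x.2 + 0 * (x.2 * x.2) + 0 * (x.1 * x.2)))) r :=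
      dcongr2 hUt (fun x hx => by rw [hu10 x hx]; ring) hr
    rw [e, key2 a b c p0 d hUopen _ _ _ _ fsm1 fsm1 fsm1 fsm1 (α * a) 0 0 0 ε 0 γ 0 0 r hr]
    ring
  have hu02 : ∀ r ∈ ((Amap a b c p0 d) ⁻¹' U), (d2 (d2 (Ftu H a b c p0 d α β γ ε κ η))) r = α * b ^ 2 * (d1 (d1 (Fu H))) ((Amap a b c p0 d) r) + 2 * α * (b * c) * (d2 (d1 (Fu H))) ((Amap a b c p0 d) r) + α * c ^ 2 * (d2 (d2 (Fu H))) ((Amap a b c p0 d) r) + 2 * β := by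
    intro r hr
    have e : (d2 (d2 (Ftu H a b c p0 d α β γ ε κ η))) r = (d2 (fun x => (α * b) * (d1 (Fu H)) ((Amap a b c p0 d) x) + (α * c) * (d2 (Fu H)) ((Amap a b c p0 d) x) + 0 * (d1 (Fu H)) ((Amap a b c p0 d) x) + 0 * (d1 (Fu H)) ((Amap a b c p0 d) x) + (κ + γ * x.1 + (2 * β) * x.2 + 0 * (x.2 * x.2) + 0 * (x.1 * x.2)))) r :=
      dcongr2 hUt (fun x hx => by rw [hu01 x hx]; ring) hr
    rw [e, key2 a b c p0 d hUopen _ _ _ _ fsm1 fsm2 fsm1 fsm1 (α * b) (α * c) 0 0 κ γ (2 * β) 0 0 r hr]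
    rw [sy11 ((Amap a b c p0 d) r) hr]
    ring
  have hu30 : ∀ r ∈ ((Amap a b c p0 d) ⁻¹' U), (d1 (d1 (d1 (Ftu H a b c p0 d α β γ ε κ η)))) r = α * a ^ 3 * (d1 (d1 (d1 (Fu H)))) ((Amap a b c p0 d) r) := by
    intro r hr
    have e : (d1 (d1 (d1 (Ftu H a b c p0 d α β γ ε κ η)))) r = (d1 (fun x => (α * a ^ 2) * (d1 (d1 (Fu H))) ((Amap a b c p0 d) x) + 0 * (d1 (d1 (Fu H))) ((Amap a b c p0 d) x) + 0 * (d1 (d1 (Fu H))) ((Amap a b c p0 d) x) + 0 * (d1 (d1 (Fu H))) ((Amap a b c p0 d) x) + (0 + 0 * x.1 + 0 * x.2 + 0 * (x.2 * x.2) + 0 * (x.1 * x.2)))) r :=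
      dcongr1 hUt (fun x hx => by rw [hu20 x hx]; ring) hr
    rw [e, key1 a b c p0 d hUopen _ _ _ _ fsm11 fsm11 fsm11 fsm11 (α * a ^ 2) 0 0 0 0 0 0 0 0 r hr]
    ring
  have hu21 : ∀ r ∈ ((Amap a b c p0 d) ⁻¹' U), (d2 (d1 (d1 (Ftu H a b c p0 d α β γ ε κ η)))) r = α * (a ^ 2 * b) * (d1 (d1 (d1 (Fu H)))) ((Amap a b c p0 d) r) + α * (a ^ 2 * c) * (d2 (d1 (d1 (Fu H)))) ((Amap a b c p0 d) r) := by
    intro r hr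
    have e : (d2 (d1 (d1 (Ftu H a b c p0 d α β γ ε κ η)))) r = (d2 (fun x => (α * a ^ 2) * (d1 (d1 (Fu H))) ((Amap a b c p0 d) x) + 0 * (d1 (d1 (Fu H))) ((Amap a b c p0 d) x) + 0 * (d1 (d1 (Fu H))) ((Amap a b c p0 d) x) + 0 * (d1 (d1 (Fu H))) ((Amap a b c p0 d) x) + (0 + 0 * x.1 + 0 * x.2 + 0 * (x.2 * x.2) + 0 * (x.1 * x.2)))) r :=
      dcongr2 hUt (fun x hx => by rw [hu20 x hx]; ring) hr
    rw [e, key2 a b c p0 d hUopen _ _ _ _ fsm11 fsm11 fsm11 fsm11 (α * a ^ 2) 0 0 0 0 0 0 0 0 r hr]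
    ring
  have hu12 : ∀ r ∈ ((Amap a b c p0 d) ⁻¹' U), (d2 (d2 (d1 (Ftu H a b c p0 d α β γ ε κ η)))) r = α * (a * b ^ 2) * (d1 (d1 (d1 (Fu H)))) ((Amap a b c p0 d) r) + 2 * α * (a * b * c) * (d2 (d1 (d1 (Fu H)))) ((Amap a b c p0 d) r) + α * (a * c ^ 2) * (d2 (d2 (d1 (Fu H)))) ((Amap a b c p0 d) r) := by
    intro r hr
    have e : (d2 (d2 (d1 (Ftu H a b c p0 d α β γ ε κ η)))) r = (d2 (fun x => (α * (a * b)) * (d1 (d1 (Fu H))) ((Amap a b c p0 d) x) + (α * (a * c)) * (d2 (d1 (Fu H))) ((Amap a b c p0 d) x) + 0 * (d1 (d1 (Fu H))) ((Amap a b c p0 d) x) + 0 * (d1 (d1 (Fu H))) ((Amap a b c p0 d) x) + (γ + 0 * x.1 + 0 * x.2 + 0 * (x.2 * x.2) + 0 * (x.1 * x.2)))) r :=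
      dcongr2 hUt (fun x hx => by rw [hu11 x hx]; ring) hr
    rw [e, key2 a b c p0 d hUopen _ _ _ _ fsm11 fsm21 fsm11 fsm11 (α * (a * b)) (α * (a * c)) 0 0 γ 0 0 0 0 r hr]
    rw [sy21 ((Amap a b c p0 d) r) hr]
    ring
  have hu03 : ∀ r ∈ ((Amap a b c p0 d) ⁻¹' U), (d2 (d2 (d2 (Ftu H a b c p0 d α β γ ε κ η)))) r = α * b ^ 3 * (d1 (d1 (d1 (Fu H)))) ((Amap a b c p0 d) r) + 3 * α * (b ^ 2 * c) * (d2 (d1 (d1 (Fu H)))) ((Amap a b c p0 d) r) + 3 * α * (b * c ^ 2) * (d2 (d2 (d1 (Fu H)))) ((Amap a b c p0 d) r) + α * c ^ 3 * (d2 (d2 (d2 (Fu H)))) ((Amap a b c p0 d) r) := by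
    intro r hr
    have e : (d2 (d2 (d2 (Ftu H a b c p0 d α β γ ε κ η)))) r = (d2 (fun x => (α * b ^ 2) * (d1 (d1 (Fu H))) ((Amap a b c p0 d) x) + (2 * α * (b * c)) * (d2 (d1 (Fu H))) ((Amap a b c p0 d) x) + (α * c ^ 2) * (d2 (d2 (Fu H))) ((Amap a b c p0 d) x) + 0 * (d1 (d1 (Fu H))) ((Amap a b c p0 d) x) + ((2 * β) + 0 * x.1 + 0 * x.2 + 0 * (x.2 * x.2) + 0 * (x.1 * x.2)))) r :=
      dcongr2 hUt (fun x hx => by rw [hu02 x hx]; ring) hr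
    rw [e, key2 a b c p0 d hUopen _ _ _ _ fsm11 fsm21 fsm22 fsm11 (α * b ^ 2) (2 * α * (b * c)) (α * c ^ 2) 0 (2 * β) 0 0 0 0 r hr]
    rw [sy21 ((Amap a b c p0 d) r) hr]
    rw [sy12 ((Amap a b c p0 d) r) hr]
    ring
  have hu40 : ∀ r ∈ ((Amap a b c p0 d) ⁻¹' U), (d1 (d1 (d1 (d1 (Ftu H a b c p0 d α β γ ε κ η))))) r = α * a ^ 4 * (d1 (d1 (d1 (d1 (Fu H))))) ((Amap a b c p0 d) r) := by
    intro r hr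
    have e : (d1 (d1 (d1 (d1 (Ftu H a b c p0 d α β γ ε κ η))))) r = (d1 (fun x => (α * a ^ 3) * (d1 (d1 (d1 (Fu H)))) ((Amap a b c p0 d) x) + 0 * (d1 (d1 (d1 (Fu H)))) ((Amap a b c p0 d) x) + 0 * (d1 (d1 (d1 (Fu H)))) ((Amap a b c p0 d) x) + 0 * (d1 (d1 (d1 (Fu H)))) ((Amap a b c p0 d) x) + (0 + 0 * x.1 + 0 * x.2 + 0 * (x.2 * x.2) + 0 * (x.1 * x.2)))) r :=
      dcongr1 hUt (fun x hx => by rw [hu30 x hx]; ring) hr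
    rw [e, key1 a b c p0 d hUopen _ _ _ _ fsm111 fsm111 fsm111 fsm111 (α * a ^ 3) 0 0 0 0 0 0 0 0 r hr]
    ring
  have hu31 : ∀ r ∈ ((Amap a b c p0 d) ⁻¹' U), (d2 (d1 (d1 (d1 (Ftu H a b c p0 d α β γ ε κ η))))) r = α * (a ^ 3 * b) * (d1 (d1 (d1 (d1 (Fu H))))) ((Amap a b c p0 d) r) + α * (a ^ 3 * c) * (d2 (d1 (d1 (d1 (Fu H))))) ((Amap a b c p0 d) r) := by
    intro r hr
    have e : (d2 (d1 (d1 (d1 (Ftu H a b c p0 d α β γ ε κ η))))) r = (d2 (fun x => (α * a ^ 3) * (d1 (d1 (d1 (Fu H)))) ((Amap a b c p0 d) x) + 0 * (d1 (d1 (d1 (Fu H)))) ((Amap a b c p0 d) x) + 0 * (d1 (d1 (d1 (Fu H)))) ((Amap a b c p0 d) x) + 0 * (d1 (d1 (d1 (Fu H)))) ((Amap a b c p0 d) x) + (0 + 0 * x.1 + 0 * x.2 + 0 * (x.2 * x.2) + 0 * (x.1 * x.2)))) r :=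
      dcongr2 hUt (fun x hx => by rw [hu30 x hx]; ring) hr
    rw [e, key2 a b c p0 d hUopen _ _ _ _ fsm111 fsm111 fsm111 fsm111 (α * a ^ 3) 0 0 0 0 0 0 0 0 r hr]
    ring
  have hu22 : ∀ r ∈ ((Amap a b c p0 d) ⁻¹' U), (d2 (d2 (d1 (d1 (Ftu H a b c p0 d α β γ ε κ η))))) r = α * (a ^ 2 * b ^ 2) * (d1 (d1 (d1 (d1 (Fu H))))) ((Amap a b c p0 d) r) + 2 * α * (a ^ 2 * b * c) * (d2 (d1 (d1 (d1 (Fu H))))) ((Amap a b c p0 d) r) + α * (a ^ 2 * c ^ 2) * (d2 (d2 (d1 (d1 (Fu H))))) ((Amap a b c p0 d) r) := by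
    intro r hr
    have e : (d2 (d2 (d1 (d1 (Ftu H a b c p0 d α β γ ε κ η))))) r = (d2 (fun x => (α * (a ^ 2 * b)) * (d1 (d1 (d1 (Fu H)))) ((Amap a b c p0 d) x) + (α * (a ^ 2 * c)) * (d2 (d1 (d1 (Fu H)))) ((Amap a b c p0 d) x) + 0 * (d1 (d1 (d1 (Fu H)))) ((Amap a b c p0 d) x) + 0 * (d1 (d1 (d1 (Fu H)))) ((Amap a b c p0 d) x) + (0 + 0 * x.1 + 0 * x.2 + 0 * (x.2 * x.2) + 0 * (x.1 * x.2)))) r :=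
      dcongr2 hUt (fun x hx => by rw [hu21 x hx]; ring) hr
    rw [e, key2 a b c p0 d hUopen _ _ _ _ fsm111 fsm211 fsm111 fsm111 (α * (a ^ 2 * b)) (α * (a ^ 2 * c)) 0 0 0 0 0 0 0 r hr]
    rw [sy31 ((Amap a b c p0 d) r) hr]
    ring
  have hu13 : ∀ r ∈ ((Amap a b c p0 d) ⁻¹' U), (d2 (d2 (d2 (d1 (Ftu H a b c p0 d α β γ ε κ η))))) r = α * (a * b ^ 3) * (d1 (d1 (d1 (d1 (Fu H))))) ((Amap a b c p0 d) r) + 3 * α * (a * b ^ 2 * c) * (d2 (d1 (d1 (d1 (Fu H))))) ((Amap a b c p0 d) r) + 3 * α * (a * b * c ^ 2) * (d2 (d2 (d1 (d1 (Fu H))))) ((Amap a b c p0 d) r) + α * (a * c ^ 3) * (d2 (d2 (d2 (d1 (Fu H))))) ((Amap a b c p0 d) r) := by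
    intro r hr
    have e : (d2 (d2 (d2 (d1 (Ftu H a b c p0 d α β γ ε κ η))))) r = (d2 (fun x => (α * (a * b ^ 2)) * (d1 (d1 (d1 (Fu H)))) ((Amap a b c p0 d) x) + (2 * α * (a * b * c)) * (d2 (d1 (d1 (Fu H)))) ((Amap a b c p0 d) x) + (α * (a * c ^ 2)) * (d2 (d2 (d1 (Fu H)))) ((Amap a b c p0 d) x) + 0 * (d1 (d1 (d1 (Fu H)))) ((Amap a b c p0 d) x) + (0 + 0 * x.1 + 0 * x.2 + 0 * (x.2 * x.2) + 0 * (x.1 * x.2)))) r :=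
      dcongr2 hUt (fun x hx => by rw [hu12 x hx]; ring) hr
    rw [e, key2 a b c p0 d hUopen _ _ _ _ fsm111 fsm211 fsm221 fsm111 (α * (a * b ^ 2)) (2 * α * (a * b * c)) (α * (a * c ^ 2)) 0 0 0 0 0 0 r hr]
    rw [sy31 ((Amap a b c p0 d) r) hr]
    rw [sy22 ((Amap a b c p0 d) r) hr]
    ring
  have hu04 : ∀ r ∈ ((Amap a b c p0 d) ⁻¹' U), (d2 (d2 (d2 (d2 (Ftu H a b c p0 d α β γ ε κ η))))) r = α * b ^ 4 * (d1 (d1 (d1 (d1 (Fu H))))) ((Amap a b c p0 d) r) + 4 * α * (b ^ 3 * c) * (d2 (d1 (d1 (d1 (Fu H))))) ((Amap a b c p0 d) r) + 6 * α * (b ^ 2 * c ^ 2) * (d2 (d2 (d1 (d1 (Fu H))))) ((Amap a b c p0 d) r) + 4 * α * (b * c ^ 3) * (d2 (d2 (d2 (d1 (Fu H))))) ((Amap a b c p0 d) r) + α * c ^ 4 * (d2 (d2 (d2 (d2 (Fu H))))) ((Amap a b c p0 d) r) := by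
    intro r hr
    have e : (d2 (d2 (d2 (d2 (Ftu H a b c p0 d α β γ ε κ η))))) r = (d2 (fun x => (α * b ^ 3) * (d1 (d1 (d1 (Fu H)))) ((Amap a b c p0 d) x) + (3 * α * (b ^ 2 * c)) * (d2 (d1 (d1 (Fu H)))) ((Amap a b c p0 d) x) + (3 * α * (b * c ^ 2)) * (d2 (d2 (d1 (Fu H)))) ((Amap a b c p0 d) x) + (α * c ^ 3) * (d2 (d2 (d2 (Fu H)))) ((Amap a b c p0 d) x) + (0 + 0 * x.1 + 0 * x.2 + 0 * (x.2 * x.2) + 0 * (x.1 * x.2)))) r :=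
      dcongr2 hUt (fun x hx => by rw [hu03 x hx]; ring) hr
    rw [e, key2 a b c p0 d hUopen _ _ _ _ fsm111 fsm211 fsm221 fsm222 (α * b ^ 3) (3 * α * (b ^ 2 * c)) (3 * α * (b * c ^ 2)) (α * c ^ 3) 0 0 0 0 0 r hr]
    rw [sy31 ((Amap a b c p0 d) r) hr]
    rw [sy22 ((Amap a b c p0 d) r) hr]
    rw [sy13 ((Amap a b c p0 d) r) hr]
    ring
  have hq : (Amap a b c p0 d) (V, W) ∈ U := hmem
  have hqt : (V, W) ∈ ((Amap a b c p0 d) ⁻¹' U) := hmem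
  have hI : IntCond H (a * V + b * W + p0) (c * W + d) := hint _ hmem
  obtain ⟨hI1, hI2, hI3, hI4, hI5⟩ := hI
  have M20 : (pV (pV H)) (a * V + b * W + p0) (c * W + d) = (d1 (d1 (Fu H))) ((Amap a b c p0 d) (V, W)) := c20 ((Amap a b c p0 d) (V, W)) hq
  have M30 : (pV (pV (pV H))) (a * V + b * W + p0) (c * W + d) = (d1 (d1 (d1 (Fu H)))) ((Amap a b c p0 d) (V, W)) := c30 ((Amap a b c p0 d) (V, W)) hq
  have M40 : (pV (pV (pV (pV H)))) (a * V + b * W + p0) (c * W + d) = (d1 (d1 (d1 (d1 (Fu H))))) ((Amap a b c p0 d) (V, W)) := c40 ((Amap a b c p0 d) (V, W)) hq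
  have M21 : (pW (pV (pV H))) (a * V + b * W + p0) (c * W + d) = (d2 (d1 (d1 (Fu H)))) ((Amap a b c p0 d) (V, W)) := c21 ((Amap a b c p0 d) (V, W)) hq
  have M31 : (pW (pV (pV (pV H)))) (a * V + b * W + p0) (c * W + d) = (d2 (d1 (d1 (d1 (Fu H))))) ((Amap a b c p0 d) (V, W)) := c31 ((Amap a b c p0 d) (V, W)) hq
  have M22 : (pW (pW (pV (pV H)))) (a * V + b * W + p0) (c * W + d) = (d2 (d2 (d1 (d1 (Fu H))))) ((Amap a b c p0 d) (V, W)) := c22 ((Amap a b c p0 d) (V, W)) hq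
  have M12 : (pW (pW (pV H))) (a * V + b * W + p0) (c * W + d) = (d2 (d2 (d1 (Fu H)))) ((Amap a b c p0 d) (V, W)) := c12 ((Amap a b c p0 d) (V, W)) hq
  have M13 : (pW (pW (pW (pV H)))) (a * V + b * W + p0) (c * W + d) = (d2 (d2 (d2 (d1 (Fu H))))) ((Amap a b c p0 d) (V, W)) := c13 ((Amap a b c p0 d) (V, W)) hq
  have M03 : (pW (pW (pW H))) (a * V + b * W + p0) (c * W + d) = (d2 (d2 (d2 (Fu H)))) ((Amap a b c p0 d) (V, W)) := c03 ((Amap a b c p0 d) (V, W)) hq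
  have M04 : (pW (pW (pW (pW H)))) (a * V + b * W + p0) (c * W + d) = (d2 (d2 (d2 (d2 (Fu H))))) ((Amap a b c p0 d) (V, W)) := c04 ((Amap a b c p0 d) (V, W)) hq
  rw [M40, M20, M30] at hI1
  rw [M31, M20, M21, M30] at hI2
  rw [M22, M20, M21] at hI3
  rw [M13, M20, M12, M21, M03, M30] at hI4
  rw [M04, M20, M12, M03, M21] at hI5
  unfold IntCond
  have K20 : (pV (pV (fun V W => α * H (a * V + b * W + p0) (c * W + d) + β * W ^ 2 + γ * V * W + ε * V + κ * W + η))) V W = (d1 (d1 (Ftu H a b c p0 d α β γ ε κ η))) (V, W) := k20 (V, W) hqt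
  have K30 : (pV (pV (pV (fun V W => α * H (a * V + b * W + p0) (c * W + d) + β * W ^ 2 + γ * V * W + ε * V + κ * W + η)))) V W = (d1 (d1 (d1 (Ftu H a b c p0 d α β γ ε κ η)))) (V, W) := k30 (V, W) hqt
  have K40 : (pV (pV (pV (pV (fun V W => α * H (a * V + b * W + p0) (c * W + d) + β * W ^ 2 + γ * V * W + ε * V + κ * W + η))))) V W = (d1 (d1 (d1 (d1 (Ftu H a b c p0 d α β γ ε κ η))))) (V, W) := k40 (V, W) hqt
  have K21 : (pW (pV (pV (fun V W => α * H (a * V + b * W + p0) (c * W + d) + β * W ^ 2 + γ * V * W + ε * V + κ * W + η)))) V W = (d2 (d1 (d1 (Ftu H a b c p0 d α β γ ε κ η)))) (V, W) := k21 (V, W) hqt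
  have K31 : (pW (pV (pV (pV (fun V W => α * H (a * V + b * W + p0) (c * W + d) + β * W ^ 2 + γ * V * W + ε * V + κ * W + η))))) V W = (d2 (d1 (d1 (d1 (Ftu H a b c p0 d α β γ ε κ η))))) (V, W) := k31 (V, W) hqt
  have K22 : (pW (pW (pV (pV (fun V W => α * H (a * V + b * W + p0) (c * W + d) + β * W ^ 2 + γ * V * W + ε * V + κ * W + η))))) V W = (d2 (d2 (d1 (d1 (Ftu H a b c p0 d α β γ ε κ η))))) (V, W) := k22 (V, W) hqt
  have K12 : (pW (pW (pV (fun V W => α * H (a * V + b * W + p0) (c * W + d) + β * W ^ 2 + γ * V * W + ε * V + κ * W + η)))) V W = (d2 (d2 (d1 (Ftu H a b c p0 d α β γ ε κ η)))) (V, W) := k12 (V, W) hqt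
  have K13 : (pW (pW (pW (pV (fun V W => α * H (a * V + b * W + p0) (c * W + d) + β * W ^ 2 + γ * V * W + ε * V + κ * W + η))))) V W = (d2 (d2 (d2 (d1 (Ftu H a b c p0 d α β γ ε κ η))))) (V, W) := k13 (V, W) hqt
  have K03 : (pW (pW (pW (fun V W => α * H (a * V + b * W + p0) (c * W + d) + β * W ^ 2 + γ * V * W + ε * V + κ * W + η)))) V W = (d2 (d2 (d2 (Ftu H a b c p0 d α β γ ε κ η)))) (V, W) := k03 (V, W) hqt
  have K04 : (pW (pW (pW (pW (fun V W => α * H (a * V + b * W + p0) (c * W + d) + β * W ^ 2 + γ * V * W + ε * V + κ * W + η))))) V W = (d2 (d2 (d2 (d2 (Ftu H a b c p0 d α β γ ε κ η))))) (V, W) := k04 (V, W) hqt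
  refine ⟨?_, ?_, ?_, ?_, ?_⟩
  · rw [K40, K20, K30, hu40 (V, W) hqt, hu20 (V, W) hqt, hu30 (V, W) hqt]
    linear_combination (α ^ 2 * a ^ 6) * hI1
  · rw [K31, K20, K21, K30, hu31 (V, W) hqt, hu20 (V, W) hqt, hu21 (V, W) hqt, hu30 (V, W) hqt]
    linear_combination (α ^ 2 * a ^ 5 * b) * hI1 + (α ^ 2 * a ^ 5 * c) * hI2
  · rw [K22, K20, K21, hu22 (V, W) hqt, hu20 (V, W) hqt, hu21 (V, W) hqt]
    linear_combination (α ^ 2 * a ^ 4 * b ^ 2) * hI1 + (2 * α ^ 2 * a ^ 4 * b * c) * hI2 + (α ^ 2 * a ^ 4 * c ^ 2) * hI3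
  · rw [K13, K20, K12, K21, K03, K30, hu13 (V, W) hqt, hu20 (V, W) hqt, hu12 (V, W) hqt, hu21 (V, W) hqt, hu03 (V, W) hqt, hu30 (V, W) hqt]
    linear_combination (α ^ 2 * a ^ 3 * b ^ 3) * hI1 + (3 * α ^ 2 * a ^ 3 * b ^ 2 * c) * hI2 + (3 * α ^ 2 * a ^ 3 * b * c ^ 2) * hI3 + (α ^ 2 * a ^ 3 * c ^ 3) * hI4
  · rw [K04, K20, K12, K03, K21, hu04 (V, W) hqt, hu20 (V, W) hqt, hu12 (V, W) hqt, hu03 (V, W) hqt, hu21 (V, W) hqt]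
    linear_combination (α ^ 2 * a ^ 2 * b ^ 4) * hI1 + (4 * α ^ 2 * a ^ 2 * b ^ 3 * c) * hI2 + (6 * α ^ 2 * a ^ 2 * b ^ 2 * c ^ 2) * hI3 + (4 * α ^ 2 * a ^ 2 * b * c ^ 3) * hI4 + (α ^ 2 * a ^ 2 * c ^ 4) * hI5
end

section
/- Let F₀, F₁, F₂ : Ω → ℝ be smooth functions on an open set Ω ⊆ ℝⁿ, and let v : ℝ³ → Ω be a smooth map of (x,y,t) such that for each i = 1,…,n, ∂_t(∂F₀/∂vⁱ ∘ v) + ∂_x(∂F₁/∂vⁱ ∘ v) + ∂_y(∂F₂/∂vⁱ ∘ v) = 0. Then the Legendre densities L(F_α) = Σ_k v^k·∂F_α/∂v^k − F_α satisfy the additional conservation law ∂_t(L(F₀) ∘ v) + ∂_x(L(F₁) ∘ v) + ∂_y(L(F₂) ∘ v) = 0. -/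
noncomputable def px (f : ℝ → ℝ → ℝ → ℝ) : ℝ → ℝ → ℝ → ℝ := fun x y t => deriv (fun s => f s y t) x
noncomputable def py (f : ℝ → ℝ → ℝ → ℝ) : ℝ → ℝ → ℝ → ℝ := fun x y t => deriv (fun s => f x s t) y
noncomputable def pt (f : ℝ → ℝ → ℝ → ℝ) : ℝ → ℝ → ℝ → ℝ := fun x y t => deriv (fun s => f x y s) t

def Smooth3 (f : ℝ → ℝ → ℝ → ℝ) : Prop :=
  ContDiff ℝ (⊤ : ℕ∞) (fun p : ℝ × ℝ × ℝ => f p.1 p.2.1 p.2.2)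

/-- Partial derivative of `F` in the `i`-th coordinate direction. -/
noncomputable def pd {n : ℕ} (F : (Fin n → ℝ) → ℝ) (i : Fin n) (x : Fin n → ℝ) : ℝ :=
  fderiv ℝ F x (Pi.single i 1)

/-- The Legendre transform `L(F)(v) = Σ_k v^k ∂_k F(v) − F(v)`. -/
noncomputable def LegendreDensity {n : ℕ} (F : (Fin n → ℝ) → ℝ) (x : Fin n → ℝ) : ℝ :=
  (∑ k, x k * pd F k x) - F x

lemma fderiv_apply_eq_sum_pd {n : ℕ} (F : (Fin n → ℝ) → ℝ) (x w : Fin n → ℝ) :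
    fderiv ℝ F x w = ∑ k, w k * pd F k x := by
  have hw : w = ∑ k, w k • (Pi.single k 1 : Fin n → ℝ) := by
    conv_lhs => rw [← Finset.univ_sum_single w]
    refine Finset.sum_congr rfl fun k _ => ?_
    rw [← Pi.single_smul, smul_eq_mul, mul_one]
  conv_lhs => rw [hw]
  rw [map_sum]
  refine Finset.sum_congr rfl fun k _ => ?_
  rw [map_smul, smul_eq_mul]; rfl

/-- Main 1-D lemma: derivative of the Legendre density along a smooth curve. -/
lemma leg_deriv {n : ℕ} (Ω : Set (Fin n → ℝ)) (hΩ : IsOpen Ω)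
    (F : (Fin n → ℝ) → ℝ) (hF : ContDiffOn ℝ (⊤ : ℕ∞) F Ω)
    (c : ℝ → (Fin n → ℝ)) (hc : ContDiff ℝ (⊤ : ℕ∞) c) (hm : ∀ s, c s ∈ Ω) (t : ℝ) :
    deriv (fun s => LegendreDensity F (c s)) t
      = ∑ k, c t k * deriv (fun s => pd F k (c s)) t := by
  have hFa : ContDiffAt ℝ (⊤ : ℕ∞) F (c t) := hF.contDiffAt (hΩ.mem_nhds (hm t))
  have hFd : DifferentiableAt ℝ F (c t) := hFa.differentiableAt (by simp)
  have hcd : HasDerivAt c (deriv c t) t :=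
    ((hc.differentiable (by simp)) t).hasDerivAt
  -- component derivatives
  have hck : ∀ k : Fin n, HasDerivAt (fun s => c s k) (deriv c t k) t := by
    intro k
    have := (ContinuousLinearMap.proj (R := ℝ) (φ := fun _ : Fin n => ℝ) k).hasFDerivAt
      (x := c t) |>.comp_hasDerivAt t hcd
    exact this
  -- pd F k smooth at c t
  have hpdk : ∀ k : Fin n, DifferentiableAt ℝ (fun x => pd F k x) (c t) := by
    intro k
    have h1 : ContDiffAt ℝ (⊤ : ℕ∞) (fderiv ℝ F) (c t) :=
      hFa.fderiv_right (by simp)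
    have h2 : ContDiffAt ℝ (⊤ : ℕ∞) (fun x => pd F k x) (c t) := by
      have := (ContinuousLinearMap.apply ℝ ℝ (Pi.single k (1:ℝ))).contDiff.contDiffAt.comp
        (c t) h1
      exact this
    exact h2.differentiableAt (by simp)
  have hpdc : ∀ k : Fin n, HasDerivAt (fun s => pd F k (c s))
      (deriv (fun s => pd F k (c s)) t) t := by
    intro k
    have : DifferentiableAt ℝ (fun s => pd F k (c s)) t :=
      (hpdk k).comp t (hcd.differentiableAt)
    exact this.hasDerivAt
  -- derivative of F ∘ c
  have hFc : HasDerivAt (fun s => F (c s)) (fderiv ℝ F (c t) (deriv c t)) t :=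
    (hFd.hasFDerivAt).comp_hasDerivAt t hcd
  -- derivative of the sum part
  have hsum : HasDerivAt (fun s => ∑ k, c s k * pd F k (c s))
      (∑ k, (deriv c t k * pd F k (c t) + c t k * deriv (fun s => pd F k (c s)) t)) t := by
    exact HasDerivAt.fun_sum fun k _ => (hck k).mul (hpdc k)
  have hL : HasDerivAt (fun s => LegendreDensity F (c s))
      ((∑ k, (deriv c t k * pd F k (c t) + c t k * deriv (fun s => pd F k (c s)) t))
        - fderiv ℝ F (c t) (deriv c t)) t := hsum.sub hFc
  rw [hL.deriv, fderiv_apply_eq_sum_pd, Finset.sum_add_distrib]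
  ring

theorem stmt_13 (n : ℕ) (Ω : Set (Fin n → ℝ)) (hΩ : IsOpen Ω)
    (F₀ F₁ F₂ : (Fin n → ℝ) → ℝ)
    (hF₀ : ContDiffOn ℝ (⊤ : ℕ∞) F₀ Ω) (hF₁ : ContDiffOn ℝ (⊤ : ℕ∞) F₁ Ω)
    (hF₂ : ContDiffOn ℝ (⊤ : ℕ∞) F₂ Ω)
    (v : ℝ → ℝ → ℝ → (Fin n → ℝ))
    (hv : ContDiff ℝ (⊤ : ℕ∞) (fun p : ℝ × ℝ × ℝ => v p.1 p.2.1 p.2.2))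
    (hmem : ∀ x y t, v x y t ∈ Ω)
    (hcons : ∀ i : Fin n, ∀ x y t : ℝ,
      pt (fun x y t => pd F₀ i (v x y t)) x y t +
      px (fun x y t => pd F₁ i (v x y t)) x y t +
      py (fun x y t => pd F₂ i (v x y t)) x y t = 0) :
    ∀ x y t : ℝ,
      pt (fun x y t => LegendreDensity F₀ (v x y t)) x y t +
      px (fun x y t => LegendreDensity F₁ (v x y t)) x y t +
      py (fun x y t => LegendreDensity F₂ (v x y t)) x y t = 0 := by
  intro x y t
  -- the three curves
  have hct : ContDiff ℝ (⊤ : ℕ∞) (fun s => v x y s) := by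
    have h : ContDiff ℝ (⊤ : ℕ∞) (fun s : ℝ => ((x, y, s) : ℝ × ℝ × ℝ)) :=
      contDiff_const.prodMk (contDiff_const.prodMk contDiff_id)
    exact hv.comp h
  have hcx : ContDiff ℝ (⊤ : ℕ∞) (fun s => v s y t) := by
    have h : ContDiff ℝ (⊤ : ℕ∞) (fun s : ℝ => ((s, y, t) : ℝ × ℝ × ℝ)) :=
      contDiff_id.prodMk (contDiff_const.prodMk contDiff_const)
    exact hv.comp h
  have hcy : ContDiff ℝ (⊤ : ℕ∞) (fun s => v x s t) := by
    have h : ContDiff ℝ (⊤ : ℕ∞) (fun s : ℝ => ((x, s, t) : ℝ × ℝ × ℝ)) :=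
      contDiff_const.prodMk (contDiff_id.prodMk contDiff_const)
    exact hv.comp h
  have e0 : pt (fun x y t => LegendreDensity F₀ (v x y t)) x y t
      = ∑ k, v x y t k * pt (fun x y t => pd F₀ k (v x y t)) x y t :=
    leg_deriv Ω hΩ F₀ hF₀ (fun s => v x y s) hct (fun s => hmem x y s) t
  have e1 : px (fun x y t => LegendreDensity F₁ (v x y t)) x y t
      = ∑ k, v x y t k * px (fun x y t => pd F₁ k (v x y t)) x y t :=
    leg_deriv Ω hΩ F₁ hF₁ (fun s => v s y t) hcx (fun s => hmem s y t) x
  have e2 : py (fun x y t => LegendreDensity F₂ (v x y t)) x y t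
      = ∑ k, v x y t k * py (fun x y t => pd F₂ k (v x y t)) x y t :=
    leg_deriv Ω hΩ F₂ hF₂ (fun s => v x s t) hcy (fun s => hmem x s t) y
  rw [e0, e1, e2, ← Finset.sum_add_distrib, ← Finset.sum_add_distrib]
  refine Finset.sum_eq_zero fun k _ => ?_
  linear_combination (v x y t k) * hcons k x y t
end
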